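/- arXiv:1210.1689 — 6 statements merged into one kernel-verified Lean document; each statement's English description precedes it below -/
import Mathlib

section
/- Let ρ be a density matrix on the bipartite space indexed by Fin d_A × Fin d_B whose marginals ρ_A and ρ_B are invertible, and let ρ̃ = (1 ⊗ ρ_B^{-1/2}) * ρ * (ρ_A^{-1/2} ⊗ 1). Then the largest singular value of the realignment matrix R(ρ̃) is equal to 1. -/
open Matrix
open scoped Kronecker ComplexOrder

noncomputable section

/-- Partial trace over the second factor: `(margA ρ) i j = Σ_k ρ (i,k) (j,k)`. -/
def margA {α β : Type*} [Fintype β] (ρ : Matrix (α × β) (α × β) ℂ) : Matrix α α ℂ :=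
  Matrix.of fun i j => ∑ k, ρ (i, k) (j, k)

/-- Partial trace over the first factor: `(margB ρ) k l = Σ_i ρ (i,k) (i,l)`. -/
def margB {α β : Type*} [Fintype α] (ρ : Matrix (α × β) (α × β) ℂ) : Matrix β β ℂ :=
  Matrix.of fun k l => ∑ i, ρ (i, k) (i, l)

/-- The list of singular values of a matrix (square roots of the eigenvalues of `MᴴM`),
in decreasing order. -/
def svalsDesc {𝕜 : Type*} [RCLike 𝕜] {m n : Type*} [Fintype m] [Fintype n] [DecidableEq n]
    (M : Matrix m n 𝕜) : List ℝ :=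
  (Multiset.sort (Finset.univ.val.map fun i =>
    Real.sqrt ((Matrix.posSemidef_conjTranspose_mul_self M).isHermitian.eigenvalues i)) (· ≤ ·)).reverse

/-- The inverse of the positive semidefinite square root of a matrix. -/
def invSqrt {n : Type*} [Fintype n] [DecidableEq n] (A : Matrix n n ℂ) : Matrix n n ℂ :=
  letI := Classical.dec A.PosSemidef
  if h : A.PosSemidef then (h.1.eigenvectorUnitary.1 * diagonal ((↑) ∘ Real.sqrt ∘ h.1.eigenvalues) *
    (star h.1.eigenvectorUnitary : Matrix n n ℂ))⁻¹ else 0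

/-- The realignment of a bipartite matrix: `realign Z (i,j) (k,l) = Z (i,k) (j,l)`. -/
def realign {α β : Type*} (Z : Matrix (α × β) (α × β) ℂ) : Matrix (α × α) (β × β) ℂ :=
  Matrix.of fun p q => Z (p.1, q.1) (p.2, q.2)

/-- `ρ̃ = (1 ⊗ ρ_B^{-1/2}) * ρ * (ρ_A^{-1/2} ⊗ 1)`. -/
def rhoTilde {dA dB : ℕ} (ρ : Matrix (Fin dA × Fin dB) (Fin dA × Fin dB) ℂ) :
    Matrix (Fin dA × Fin dB) (Fin dA × Fin dB) ℂ :=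
  ((1 : Matrix (Fin dA) (Fin dA) ℂ) ⊗ₖ invSqrt (margB ρ)) * ρ *
    (invSqrt (margA ρ) ⊗ₖ (1 : Matrix (Fin dB) (Fin dB) ℂ))

namespace Matrix.PosSemidef

def sqrt {n : Type*} [Fintype n] [DecidableEq n] {A : Matrix n n ℂ} (h : A.PosSemidef) :
    Matrix n n ℂ :=
  h.1.eigenvectorUnitary.1 * diagonal ((↑) ∘ Real.sqrt ∘ h.1.eigenvalues) *
    (star h.1.eigenvectorUnitary : Matrix n n ℂ)

lemma sqrt_mul_self {n : Type*} [Fintype n] [DecidableEq n] {A : Matrix n n ℂ}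
    (h : A.PosSemidef) : h.sqrt * h.sqrt = A := by
  have hU : (star h.1.eigenvectorUnitary : Matrix n n ℂ) * h.1.eigenvectorUnitary.1 = 1 :=
    Unitary.coe_star_mul_self _
  have hD : diagonal ((↑) ∘ Real.sqrt ∘ h.1.eigenvalues) *
      diagonal ((↑) ∘ Real.sqrt ∘ h.1.eigenvalues) =
      diagonal (RCLike.ofReal ∘ h.1.eigenvalues : n → ℂ) := by
    rw [diagonal_mul_diagonal]
    congr 1
    funext i
    simp only [Function.comp_apply]
    rw [← Complex.ofReal_mul, Real.mul_self_sqrt (h.eigenvalues_nonneg i)]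
    rfl
  conv_rhs => rw [h.1.spectral_theorem]
  rw [sqrt, Unitary.conjStarAlgAut_apply]
  calc _ = h.1.eigenvectorUnitary.1 * diagonal ((↑) ∘ Real.sqrt ∘ h.1.eigenvalues) *
      ((star h.1.eigenvectorUnitary : Matrix n n ℂ) * h.1.eigenvectorUnitary.1) *
      diagonal ((↑) ∘ Real.sqrt ∘ h.1.eigenvalues) *
      (star h.1.eigenvectorUnitary : Matrix n n ℂ) := by noncomm_ring
    _ = _ := by rw [hU, Matrix.mul_one, Matrix.mul_assoc (h.1.eigenvectorUnitary.1) (diagonal _) (diagonal _), hD]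

lemma posSemidef_sqrt {n : Type*} [Fintype n] [DecidableEq n] {A : Matrix n n ℂ}
    (h : A.PosSemidef) : h.sqrt.PosSemidef := by
  have hD : (diagonal ((↑) ∘ Real.sqrt ∘ h.1.eigenvalues) : Matrix n n ℂ).PosSemidef := by
    rw [posSemidef_diagonal_iff]
    intro i
    simp only [Function.comp_apply]
    exact_mod_cast Real.sqrt_nonneg _
  have := hD.mul_mul_conjTranspose_same (h.1.eigenvectorUnitary.1)
  rw [sqrt, star_eq_conjTranspose]
  exact this

end Matrix.PosSemidef

set_option linter.unusedSectionVars false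

namespace RA

variable {d e : Type*} [Fintype d] [Fintype e] [DecidableEq d] [DecidableEq e]

lemma dot_realign (Z : Matrix (d × e) (d × e) ℂ) (x : d × d → ℂ) (y : e × e → ℂ) :
    star x ⬝ᵥ (realign Z *ᵥ y) =
      (Z * ((Matrix.of fun i j => x (i, j))ᴴ ⊗ₖ (Matrix.of fun k l => y (k, l))ᵀ)).trace := by
  simp only [Matrix.trace, Matrix.diag, Matrix.mul_apply, dotProduct, mulVec, realign,
    kroneckerMap_apply, conjTranspose_apply, transpose_apply, Matrix.of_apply, Pi.star_apply,
    Fintype.sum_prod_type, Finset.mul_sum, Finset.sum_mul, RCLike.star_def]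
  refine Finset.sum_congr rfl fun i _ => ?_
  rw [Finset.sum_comm]
  refine Finset.sum_congr rfl fun j _ => ?_
  refine Finset.sum_congr rfl fun k _ => Finset.sum_congr rfl fun l _ => ?_
  ring

lemma trace_kron_one (ρ : Matrix (d × e) (d × e) ℂ) (M : Matrix d d ℂ) :
    (ρ * (M ⊗ₖ (1 : Matrix e e ℂ))).trace = (margA ρ * M).trace := by
  simp only [Matrix.trace, Matrix.diag, Matrix.mul_apply, margA, Matrix.of_apply,
    kroneckerMap_apply, Fintype.sum_prod_type, Matrix.one_apply, mul_ite, mul_one, mul_zero,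
    ite_mul, zero_mul, one_mul, Finset.sum_mul]
  simp only [Finset.sum_ite_eq', Finset.mem_univ, if_true]
  exact Finset.sum_congr rfl fun i _ => Finset.sum_comm

lemma trace_one_kron (ρ : Matrix (d × e) (d × e) ℂ) (M : Matrix e e ℂ) :
    (ρ * ((1 : Matrix d d ℂ) ⊗ₖ M)).trace = (margB ρ * M).trace := by
  simp only [Matrix.trace, Matrix.diag, Matrix.mul_apply, margB, Matrix.of_apply,
    kroneckerMap_apply, Fintype.sum_prod_type, Matrix.one_apply, ite_mul, one_mul, zero_mul,
    mul_ite, mul_zero, Finset.sum_mul]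
  conv_lhs => enter [2, i, 2, k]; rw [Finset.sum_comm]
  simp only [Finset.sum_ite_eq', Finset.mem_univ, if_true]
  rw [Finset.sum_comm]
  exact Finset.sum_congr rfl fun k _ => Finset.sum_comm


section InvSqrt

variable {n : Type*} [Fintype n] [DecidableEq n] {A : Matrix n n ℂ}

lemma invSqrt_eq (h : A.PosSemidef) : invSqrt A = h.sqrt⁻¹ := by
  rw [invSqrt]
  exact dif_pos h

lemma isUnit_sqrt_det (h : A.PosSemidef) (hd : IsUnit A.det) : IsUnit h.sqrt.det := by
  have h2 : h.sqrt.det * h.sqrt.det = A.det := by rw [← det_mul, h.sqrt_mul_self]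
  exact isUnit_of_mul_isUnit_left (h2 ▸ hd)

lemma invSqrt_mul_sqrt (h : A.PosSemidef) (hd : IsUnit A.det) : invSqrt A * h.sqrt = 1 := by
  rw [invSqrt_eq h]; exact Matrix.nonsing_inv_mul _ (isUnit_sqrt_det h hd)

lemma sqrt_mul_invSqrt (h : A.PosSemidef) (hd : IsUnit A.det) : h.sqrt * invSqrt A = 1 := by
  rw [invSqrt_eq h]; exact Matrix.mul_nonsing_inv _ (isUnit_sqrt_det h hd)

lemma mul_invSqrt (h : A.PosSemidef) (hd : IsUnit A.det) : A * invSqrt A = h.sqrt := by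
  nth_rewrite 1 [← h.sqrt_mul_self]
  rw [mul_assoc, sqrt_mul_invSqrt h hd, mul_one]

lemma invSqrt_mul (h : A.PosSemidef) (hd : IsUnit A.det) : invSqrt A * A = h.sqrt := by
  nth_rewrite 2 [← h.sqrt_mul_self]
  rw [← mul_assoc, invSqrt_mul_sqrt h hd, one_mul]

lemma invSqrt_mul_mul (h : A.PosSemidef) (hd : IsUnit A.det) :
    invSqrt A * A * invSqrt A = 1 := by
  rw [invSqrt_mul h hd, sqrt_mul_invSqrt h hd]

lemma invSqrt_isHermitian (h : A.PosSemidef) : (invSqrt A).IsHermitian := by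
  rw [invSqrt_eq h]
  exact h.posSemidef_sqrt.1.inv

end InvSqrt

section Marg

variable {d e : Type*} [Fintype d] [Fintype e] (ρ : Matrix (d × e) (d × e) ℂ)

lemma sum_rot {α β γ : Type*} [Fintype α] [Fintype β] [Fintype γ] (f : α → β → γ → ℂ) :
    ∑ i, ∑ j, ∑ k, f i j k = ∑ k, ∑ i, ∑ j, f i j k :=
  (Finset.sum_congr rfl fun i _ => Finset.sum_comm).trans Finset.sum_comm

lemma star_ite' (c : Prop) [Decidable c] (a b : ℂ) :
    star (if c then a else b) = if c then star a else star b := apply_ite star c a b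

lemma margA_isHermitian (hρ : ρ.IsHermitian) : (margA ρ).IsHermitian := by
  ext i j
  simp only [conjTranspose_apply, margA, Matrix.of_apply, star_sum]
  refine Finset.sum_congr rfl fun k _ => ?_
  exact congrFun (congrFun hρ (i, k)) (j, k)

lemma margB_isHermitian (hρ : ρ.IsHermitian) : (margB ρ).IsHermitian := by
  ext k l
  simp only [conjTranspose_apply, margB, Matrix.of_apply, star_sum]
  refine Finset.sum_congr rfl fun i _ => ?_
  exact congrFun (congrFun hρ (i, k)) (i, l)

lemma margA_posSemidef [DecidableEq e] (hρ : ρ.PosSemidef) : (margA ρ).PosSemidef := by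
  refine PosSemidef.of_dotProduct_mulVec_nonneg (margA_isHermitian ρ hρ.1) fun x => ?_
  have key : star x ⬝ᵥ (margA ρ *ᵥ x) =
      ∑ k, star (fun p : d × e => if p.2 = k then x p.1 else 0) ⬝ᵥ
        (ρ *ᵥ fun p : d × e => if p.2 = k then x p.1 else 0) := by
    simp only [dotProduct, mulVec, Pi.star_apply, margA, Matrix.of_apply,
      Fintype.sum_prod_type, star_ite', star_zero, mul_ite, ite_mul, zero_mul, mul_zero,
      Finset.mul_sum, Finset.sum_mul, Finset.sum_ite_eq', Finset.mem_univ, if_true]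
    conv_rhs => enter [2, k, 2, i]; rw [Finset.sum_comm]
    simp only [Finset.sum_ite_eq', Finset.mem_univ, if_true]
    exact sum_rot _
  rw [key]
  exact Finset.sum_nonneg fun k _ => hρ.dotProduct_mulVec_nonneg _

lemma margB_posSemidef [DecidableEq d] (hρ : ρ.PosSemidef) : (margB ρ).PosSemidef := by
  refine PosSemidef.of_dotProduct_mulVec_nonneg (margB_isHermitian ρ hρ.1) fun x => ?_
  have key : star x ⬝ᵥ (margB ρ *ᵥ x) =
      ∑ i, star (fun p : d × e => if p.1 = i then x p.2 else 0) ⬝ᵥ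
        (ρ *ᵥ fun p : d × e => if p.1 = i then x p.2 else 0) := by
    simp only [dotProduct, mulVec, Pi.star_apply, margB, Matrix.of_apply,
      Fintype.sum_prod_type, star_ite', star_zero, mul_ite, ite_mul, zero_mul, mul_zero,
      Finset.mul_sum, Finset.sum_mul, Finset.sum_ite_eq', Finset.mem_univ, if_true]
    conv_rhs => rw [Finset.sum_comm]
    conv_rhs => enter [2, a]; rw [Finset.sum_comm]
    conv_rhs => enter [2, a, 2, b]; rw [Finset.sum_comm]
    conv_rhs => enter [2, a, 2, b, 2, c]; rw [Finset.sum_comm]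
    simp only [Finset.sum_ite_eq, Finset.mem_univ, if_true]
    conv_rhs => enter [2, a, 2, b]; rw [Finset.sum_comm]
    simp only [Finset.sum_ite_eq, Finset.mem_univ, if_true]
    exact sum_rot fun x_1 x_2 i => star (x x_1) * (ρ (i, x_1) (i, x_2) * x x_2)
  rw [key]
  exact Finset.sum_nonneg fun i _ => hρ.dotProduct_mulVec_nonneg _

lemma trace_margB (ρ : Matrix (d × e) (d × e) ℂ) : (margB ρ).trace = ρ.trace := by
  simp only [Matrix.trace, Matrix.diag, margB, Matrix.of_apply, Fintype.sum_prod_type]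
  exact Finset.sum_comm

end Marg

def vecNormSq {ι : Type*} [Fintype ι] (x : ι → ℂ) : ℝ := ∑ i, ‖x i‖ ^ 2

def frobSq {p q : Type*} [Fintype p] [Fintype q] (M : Matrix p q ℂ) : ℝ := ∑ i, ∑ j, ‖M i j‖ ^ 2

lemma frobSq_transpose {p q : Type*} [Fintype p] [Fintype q] (M : Matrix p q ℂ) :
    frobSq Mᵀ = frobSq M := Finset.sum_comm

lemma frobSq_conjTranspose {p q : Type*} [Fintype p] [Fintype q] (M : Matrix p q ℂ) :
    frobSq Mᴴ = frobSq M := by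
  simp only [frobSq, conjTranspose_apply, norm_star]
  exact Finset.sum_comm

lemma vecNormSq_eq_frobSq {p q : Type*} [Fintype p] [Fintype q] (x : p × q → ℂ) :
    vecNormSq x = frobSq (Matrix.of fun i j => x (i, j)) := by
  simp [vecNormSq, frobSq, Fintype.sum_prod_type]

lemma trace_mul_conjTranspose_self {p q : Type*} [Fintype p] [Fintype q] (M : Matrix p q ℂ) :
    (M * Mᴴ).trace = (frobSq M : ℂ) := by
  simp only [Matrix.trace, Matrix.diag, Matrix.mul_apply, conjTranspose_apply, frobSq]
  push_cast
  refine Finset.sum_congr rfl fun i _ => Finset.sum_congr rfl fun j _ => ?_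
  rw [RCLike.star_def, Complex.mul_conj']

lemma trace_conjTranspose_self_mul {p q : Type*} [Fintype p] [Fintype q] (M : Matrix p q ℂ) :
    (Mᴴ * M).trace = (frobSq M : ℂ) := by
  rw [← frobSq_conjTranspose M, ← trace_mul_conjTranspose_self Mᴴ, conjTranspose_conjTranspose]

lemma norm_trace_mul_le {p q : Type*} [Fintype p] [Fintype q] (U : Matrix p q ℂ) (V : Matrix q p ℂ) :
    ‖(U * V).trace‖ ≤ Real.sqrt (frobSq U) * Real.sqrt (frobSq V) := by
  classical
  let u : EuclideanSpace ℂ (p × q) := WithLp.toLp 2 fun pq : p × q => star (U pq.1 pq.2)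
  let v : EuclideanSpace ℂ (p × q) := WithLp.toLp 2 fun pq : p × q => V pq.2 pq.1
  have h1 : (U * V).trace = inner (𝕜 := ℂ) u v := by
    simp only [Matrix.trace, Matrix.diag, Matrix.mul_apply, PiLp.inner_apply, RCLike.inner_apply,
      u, v, Fintype.sum_prod_type, starRingEnd_apply, star_star]
    exact Finset.sum_congr rfl fun i _ => Finset.sum_congr rfl fun j _ => mul_comm _ _
  have h2 : ‖u‖ = Real.sqrt (frobSq U) := by
    rw [EuclideanSpace.norm_eq]
    congr 1
    simp [u, frobSq, Fintype.sum_prod_type]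
  have h3 : ‖v‖ = Real.sqrt (frobSq V) := by
    rw [EuclideanSpace.norm_eq]
    congr 1
    simp only [v, frobSq, Fintype.sum_prod_type]
    exact Finset.sum_comm
  calc ‖(U * V).trace‖ = ‖inner (𝕜 := ℂ) u v‖ := by rw [h1]
    _ ≤ ‖u‖ * ‖v‖ := norm_inner_le_norm u v
    _ = _ := by rw [h2, h3]

lemma kron_conjTranspose {p q p' q' : Type*} (A : Matrix p q ℂ) (B : Matrix p' q' ℂ) :
    (A ⊗ₖ B)ᴴ = Aᴴ ⊗ₖ Bᴴ := by
  ext ⟨i, k⟩ ⟨j, l⟩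
  simp [conjTranspose_apply, kroneckerMap_apply, mul_comm]


section Core

variable {dA dB : ℕ} (ρ : Matrix (Fin dA × Fin dB) (Fin dA × Fin dB) ℂ)

local notation "dd" => Fin dA
local notation "ee" => Fin dB

lemma trace_rhoTilde_kron' (X : Matrix dd dd ℂ) (Y : Matrix ee ee ℂ) :
    (rhoTilde ρ * (X ⊗ₖ Y)).trace =
      (ρ * ((invSqrt (margA ρ) * X) ⊗ₖ (Y * invSqrt (margB ρ)))).trace := by
  rw [rhoTilde]
  rw [Matrix.mul_assoc, Matrix.mul_assoc, Matrix.trace_mul_comm]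
  rw [Matrix.mul_assoc, Matrix.mul_assoc, ← Matrix.mul_assoc (invSqrt (margA ρ) ⊗ₖ 1)]
  rw [← mul_kronecker_mul, ← mul_kronecker_mul, mul_one, one_mul]

lemma key_bound (hρ : ρ.PosSemidef) (hA : IsUnit (margA ρ).det) (hB : IsUnit (margB ρ).det)
    (x : dd × dd → ℂ) (y : ee × ee → ℂ) :
    ‖star x ⬝ᵥ (realign (rhoTilde ρ) *ᵥ y)‖ ≤
      Real.sqrt (vecNormSq x) * Real.sqrt (vecNormSq y) := by
  have hApsd := margA_posSemidef ρ hρ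
  have hBpsd := margB_posSemidef ρ hρ
  set X : Matrix dd dd ℂ := Matrix.of fun i j => x (i, j) with hX
  set Y : Matrix ee ee ℂ := Matrix.of fun k l => y (k, l) with hY
  set a := invSqrt (margA ρ) with ha
  set b := invSqrt (margB ρ) with hb
  set s := hρ.sqrt with hs
  have hsh : sᴴ = s := hρ.posSemidef_sqrt.1
  have hah : aᴴ = a := invSqrt_isHermitian hApsd
  have hbh : bᴴ = b := invSqrt_isHermitian hBpsd
  set C1 := a * Xᴴ with hC1
  set C2 := Yᵀ * b with hC2
  set U := s * (C1 ⊗ₖ (1 : Matrix ee ee ℂ)) with hU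
  set V := ((1 : Matrix dd dd ℂ) ⊗ₖ C2) * s with hV
  have e1 : star x ⬝ᵥ (realign (rhoTilde ρ) *ᵥ y) = (U * V).trace := by
    rw [dot_realign, ← hX, ← hY, trace_rhoTilde_kron', ← ha, ← hb, ← hC1, ← hC2]
    have hUV : U * V = s * ((C1 ⊗ₖ C2) * s) := by
      rw [hU, hV, Matrix.mul_assoc, ← Matrix.mul_assoc (C1 ⊗ₖ (1 : Matrix ee ee ℂ)),
        ← mul_kronecker_mul, mul_one, one_mul]
    rw [hUV]
    conv_rhs => rw [Matrix.trace_mul_comm, Matrix.mul_assoc, hs, hρ.sqrt_mul_self,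
      Matrix.trace_mul_comm]
  have hUfrobC : (frobSq U : ℂ) = (vecNormSq x : ℂ) := by
    calc (frobSq U : ℂ) = (U * Uᴴ).trace := (trace_mul_conjTranspose_self U).symm
    _ = (ρ * ((C1 * C1ᴴ) ⊗ₖ 1)).trace := by
        conv_lhs => rw [hU, conjTranspose_mul, kron_conjTranspose, conjTranspose_one, hsh,
          Matrix.mul_assoc, ← Matrix.mul_assoc (C1 ⊗ₖ (1 : Matrix ee ee ℂ)),
          ← mul_kronecker_mul, mul_one,
          Matrix.trace_mul_comm, Matrix.mul_assoc, hs, hρ.sqrt_mul_self,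
          Matrix.trace_mul_comm]
    _ = ((margA ρ) * (C1 * C1ᴴ)).trace := trace_kron_one ρ _
    _ = (Xᴴ * X).trace := by
        have h1 : margA ρ * (C1 * C1ᴴ) = (margA ρ * a * Xᴴ * X) * a := by
          rw [hC1, conjTranspose_mul, hah, conjTranspose_conjTranspose]; noncomm_ring
        have h2 : a * (margA ρ * a * Xᴴ * X) = (a * margA ρ * a) * (Xᴴ * X) := by
          noncomm_ring
        rw [h1, Matrix.trace_mul_comm, h2, ha, invSqrt_mul_mul hApsd hA, one_mul]
    _ = (frobSq X : ℂ) := trace_conjTranspose_self_mul X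
    _ = (vecNormSq x : ℂ) := by rw [vecNormSq_eq_frobSq, hX]
  have hVfrobC : (frobSq V : ℂ) = (vecNormSq y : ℂ) := by
    calc (frobSq V : ℂ) = (Vᴴ * V).trace := (trace_conjTranspose_self_mul V).symm
    _ = (ρ * (1 ⊗ₖ (C2ᴴ * C2))).trace := by
        conv_lhs => rw [hV, conjTranspose_mul, kron_conjTranspose, conjTranspose_one, hsh,
          Matrix.mul_assoc, ← Matrix.mul_assoc ((1 : Matrix dd dd ℂ) ⊗ₖ C2ᴴ),
          ← mul_kronecker_mul, mul_one,
          Matrix.trace_mul_comm, Matrix.mul_assoc, hs, hρ.sqrt_mul_self,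
          Matrix.trace_mul_comm]
    _ = ((margB ρ) * (C2ᴴ * C2)).trace := trace_one_kron ρ _
    _ = (Yᵀᴴ * Yᵀ).trace := by
        have h1 : margB ρ * (C2ᴴ * C2) = (margB ρ * b * Yᵀᴴ * Yᵀ) * b := by
          rw [hC2, conjTranspose_mul, hbh]; noncomm_ring
        have h2 : b * (margB ρ * b * Yᵀᴴ * Yᵀ) = (b * margB ρ * b) * (Yᵀᴴ * Yᵀ) := by
          noncomm_ring
        rw [h1, Matrix.trace_mul_comm, h2, hb, invSqrt_mul_mul hBpsd hB, one_mul]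
    _ = (frobSq Yᵀ : ℂ) := trace_conjTranspose_self_mul Yᵀ
    _ = (vecNormSq y : ℂ) := by rw [frobSq_transpose, vecNormSq_eq_frobSq, hY]
  have hUfrob : frobSq U = vecNormSq x := by exact_mod_cast hUfrobC
  have hVfrob : frobSq V = vecNormSq y := by exact_mod_cast hVfrobC
  rw [e1, ← hUfrob, ← hVfrob]
  exact norm_trace_mul_le U V

lemma eq_of_forall_dot {ι : Type*} [Fintype ι] [DecidableEq ι] {u v : ι → ℂ}
    (h : ∀ x, star x ⬝ᵥ u = star x ⬝ᵥ v) : u = v := by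
  funext p
  have hs : star ((Pi.single p 1 : ι → ℂ)) = (Pi.single p 1 : ι → ℂ) := by
    funext q
    by_cases hq : q = p <;> simp [hq, Pi.star_apply, Pi.single_apply]
  have := h (Pi.single p 1)
  rwa [hs, single_dotProduct, single_dotProduct, one_mul, one_mul] at this

lemma dot_vec_matrix {p q : Type*} [Fintype p] [Fintype q] (M : Matrix p q ℂ) (x : p × q → ℂ) :
    star x ⬝ᵥ (fun r : p × q => M r.1 r.2) =
      (M * (Matrix.of fun i j => x (i, j))ᴴ).trace := by
  simp only [dotProduct, Pi.star_apply, Matrix.trace, Matrix.diag, Matrix.mul_apply,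
    conjTranspose_apply, Matrix.of_apply, Fintype.sum_prod_type]
  refine Finset.sum_congr rfl fun i _ => Finset.sum_congr rfl fun j _ => ?_
  rw [RCLike.star_def, mul_comm]

lemma adjoint_dot {p q : Type*} [Fintype p] [Fintype q] (M : Matrix p q ℂ)
    (x0 : p → ℂ) (y : q → ℂ) :
    star y ⬝ᵥ (Mᴴ *ᵥ x0) = star (star x0 ⬝ᵥ (M *ᵥ y)) := by
  calc star y ⬝ᵥ (Mᴴ *ᵥ x0)
      = star y ⬝ᵥ star (star x0 ᵥ* M) := by rw [Matrix.star_vecMul, star_star]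
    _ = star ((star x0 ᵥ* M) ⬝ᵥ y) := Matrix.star_dotProduct_star _ _
    _ = star (star x0 ⬝ᵥ (M *ᵥ y)) := by rw [Matrix.dotProduct_mulVec]

lemma realign_mulVec (hρ : ρ.PosSemidef) (hA : IsUnit (margA ρ).det)
    (hB : IsUnit (margB ρ).det) :
    realign (rhoTilde ρ) *ᵥ (fun r : ee × ee => (margB_posSemidef ρ hρ).sqrt r.2 r.1)
      = fun r : dd × dd => (margA_posSemidef ρ hρ).sqrt r.1 r.2 := by
  have hApsd := margA_posSemidef ρ hρ
  have hBpsd := margB_posSemidef ρ hρ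
  set sA := hApsd.sqrt with hsA
  set sB := hBpsd.sqrt with hsB
  refine eq_of_forall_dot fun x => ?_
  have hof : (Matrix.of fun k l => (fun r : ee × ee => sB r.2 r.1) (k, l)) = sBᵀ := rfl
  rw [dot_realign, hof, transpose_transpose, trace_rhoTilde_kron', hsB,
    sqrt_mul_invSqrt hBpsd hB, trace_kron_one, ← Matrix.mul_assoc,
    mul_invSqrt hApsd hA, ← hsA, dot_vec_matrix]

lemma realign_conjT_mulVec (hρ : ρ.PosSemidef) (hA : IsUnit (margA ρ).det)
    (hB : IsUnit (margB ρ).det) :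
    (realign (rhoTilde ρ))ᴴ *ᵥ (fun r : dd × dd => (margA_posSemidef ρ hρ).sqrt r.1 r.2)
      = fun r : ee × ee => (margB_posSemidef ρ hρ).sqrt r.2 r.1 := by
  have hApsd := margA_posSemidef ρ hρ
  have hBpsd := margB_posSemidef ρ hρ
  set sA := hApsd.sqrt with hsA
  set sB := hBpsd.sqrt with hsB
  have hsAh : sAᴴ = sA := hApsd.posSemidef_sqrt.1
  have hsBh : sBᴴ = sB := hBpsd.posSemidef_sqrt.1
  refine eq_of_forall_dot fun y => ?_
  rw [adjoint_dot]
  have hof : (Matrix.of fun i j => (fun r : dd × dd => sA r.1 r.2) (i, j)) = sA := rfl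
  rw [dot_realign, hof, hsAh, trace_rhoTilde_kron', hsA,
    invSqrt_mul_sqrt hApsd hA, trace_one_kron, ← Matrix.mul_assoc,
    Matrix.trace_mul_comm, ← Matrix.mul_assoc, invSqrt_mul hBpsd hB, ← hsB]
  -- ⊢ star ((sB * (of fun k l => y (k, l))ᵀ).trace) = star y ⬝ᵥ (fun r => sB r.2 r.1)
  simp only [Matrix.trace, Matrix.diag, Matrix.mul_apply, transpose_apply, Matrix.of_apply,
    dotProduct, Pi.star_apply, star_sum, star_mul', Fintype.sum_prod_type, RCLike.star_def]
  refine Finset.sum_congr rfl fun k _ => Finset.sum_congr rfl fun l _ => ?_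
  have hh : (starRingEnd ℂ) (sB k l) = sB l k := by
    have h2 := congrFun (congrFun hsBh l) k
    simpa [conjTranspose_apply, RCLike.star_def] using h2
  rw [hh, mul_comm]

lemma dot_self_eq_vecNormSq {ι : Type*} [Fintype ι] (u : ι → ℂ) :
    star u ⬝ᵥ u = (vecNormSq u : ℂ) := by
  simp only [dotProduct, Pi.star_apply, vecNormSq]
  push_cast
  refine Finset.sum_congr rfl fun p _ => ?_
  rw [mul_comm, RCLike.star_def, Complex.mul_conj']

lemma smul_dot_aux {ι : Type*} [Fintype ι] (r : ℝ) (u v : ι → ℂ) :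
    star u ⬝ᵥ (r • v) = (r : ℂ) * (star u ⬝ᵥ v) := by
  simp only [dotProduct, Pi.smul_apply, Pi.star_apply, Finset.mul_sum]
  refine Finset.sum_congr rfl fun p _ => ?_
  rw [Complex.real_smul]
  ring

lemma eig_le_one (hρ : ρ.PosSemidef) (hA : IsUnit (margA ρ).det) (hB : IsUnit (margB ρ).det)
    (i : ee × ee) :
    (Matrix.posSemidef_conjTranspose_mul_self
      (realign (rhoTilde ρ))).isHermitian.eigenvalues i ≤ 1 := by
  set N := realign (rhoTilde ρ) with hN
  set hP := (Matrix.posSemidef_conjTranspose_mul_self N).isHermitian with hhP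
  set lam := hP.eigenvalues i with hlam
  set v : (ee × ee) → ℂ := ⇑(hP.eigenvectorBasis i) with hv
  have hPv : (Nᴴ * N) *ᵥ v = lam • v := hP.mulVec_eigenvectorBasis i
  have hvnorm : vecNormSq v = 1 := by
    have h1 : ‖hP.eigenvectorBasis i‖ = 1 := (hP.eigenvectorBasis).orthonormal.1 i
    have h2 : ‖hP.eigenvectorBasis i‖ = Real.sqrt (vecNormSq v) := by
      rw [EuclideanSpace.norm_eq]
      rfl
    have h3 : Real.sqrt (vecNormSq v) = 1 := by rw [← h2, h1]
    have h4 : vecNormSq v = Real.sqrt (vecNormSq v) ^ 2 := by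
      rw [Real.sq_sqrt]
      exact Finset.sum_nonneg fun p _ => sq_nonneg _
    rw [h4, h3, one_pow]
  set w := N *ᵥ v with hw
  have e1 : star v ⬝ᵥ ((Nᴴ * N) *ᵥ v) = star (star w ⬝ᵥ w) := by
    rw [← Matrix.mulVec_mulVec, adjoint_dot, hw]
  have e2 : star v ⬝ᵥ ((Nᴴ * N) *ᵥ v) = (lam : ℂ) := by
    rw [hPv, smul_dot_aux, dot_self_eq_vecNormSq, hvnorm]
    simp
  have e3 : (lam : ℂ) = (vecNormSq w : ℂ) := by
    rw [← e2, e1, dot_self_eq_vecNormSq]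
    simp [RCLike.star_def, Complex.conj_ofReal]
  have hlw : lam = vecNormSq w := by exact_mod_cast e3
  have hb : ‖star w ⬝ᵥ (N *ᵥ v)‖ ≤ Real.sqrt (vecNormSq w) * Real.sqrt (vecNormSq v) :=
    key_bound ρ hρ hA hB w v
  rw [← hw, dot_self_eq_vecNormSq, hvnorm, Real.sqrt_one, mul_one] at hb
  have hwnn : 0 ≤ vecNormSq w := Finset.sum_nonneg fun p _ => sq_nonneg _
  rw [Complex.norm_real, Real.norm_of_nonneg hwnn] at hb
  -- vecNormSq w ≤ sqrt (vecNormSq w) implies vecNormSq w ≤ 1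
  by_contra hcon
  push_neg at hcon
  rw [hlw] at hcon
  have h5 : Real.sqrt (vecNormSq w) < vecNormSq w := by
    nlinarith [Real.sq_sqrt hwnn, Real.sqrt_nonneg (vecNormSq w)]
  linarith

lemma exists_eig_one (hρ : ρ.PosSemidef) (htr : ρ.trace = 1)
    (hA : IsUnit (margA ρ).det) (hB : IsUnit (margB ρ).det) :
    ∃ i : ee × ee, (Matrix.posSemidef_conjTranspose_mul_self
      (realign (rhoTilde ρ))).isHermitian.eigenvalues i = 1 := by
  set N := realign (rhoTilde ρ) with hN
  set hP := (Matrix.posSemidef_conjTranspose_mul_self N).isHermitian with hhP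
  have hBpsd := margB_posSemidef ρ hρ
  set sB := hBpsd.sqrt with hsB
  have hsBh : sBᴴ = sB := hBpsd.posSemidef_sqrt.1
  set ya : (ee × ee) → ℂ := fun r => sB r.2 r.1 with hya
  have hyP : (Nᴴ * N) *ᵥ ya = ya := by
    rw [← Matrix.mulVec_mulVec, hN, realign_mulVec ρ hρ hA hB, realign_conjT_mulVec ρ hρ hA hB]
  have hyn : vecNormSq ya = 1 := by
    have h1 : (vecNormSq ya : ℂ) = 1 := by
      rw [vecNormSq_eq_frobSq]
      have : (Matrix.of fun k l => ya (k, l)) = sBᵀ := rfl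
      rw [this, frobSq_transpose, ← trace_conjTranspose_self_mul, hsBh, hsB,
        hBpsd.sqrt_mul_self, trace_margB, htr]
    exact_mod_cast h1
  have hyne : ya ≠ 0 := by
    intro h0
    rw [h0] at hyn
    simp [vecNormSq] at hyn
  have hex : ∃ i : ee × ee, star (⇑(hP.eigenvectorBasis i)) ⬝ᵥ ya ≠ 0 := by
    by_contra hno
    push_neg at hno
    apply hyne
    have h0 : (hP.eigenvectorBasis).repr (WithLp.toLp 2 ya) = 0 := by
      ext i
      rw [OrthonormalBasis.repr_apply_apply]
      simpa [PiLp.inner_apply, dotProduct, mul_comm] using hno i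
    have := (hP.eigenvectorBasis).repr.map_eq_zero_iff.mp h0
    simpa using congrArg WithLp.ofLp this
  obtain ⟨i, hi⟩ := hex
  refine ⟨i, ?_⟩
  set v : (ee × ee) → ℂ := ⇑(hP.eigenvectorBasis i) with hv
  set lam := hP.eigenvalues i with hlam
  have hPv : (Nᴴ * N) *ᵥ v = lam • v := hP.mulVec_eigenvectorBasis i
  have hPH : (Nᴴ * N)ᴴ = Nᴴ * N := hP
  have e1 : star v ⬝ᵥ ((Nᴴ * N) *ᵥ ya) = star (star ya ⬝ᵥ ((Nᴴ * N) *ᵥ v)) := by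
    conv_lhs => rw [← hPH]
    rw [adjoint_dot]
  have e2 : star v ⬝ᵥ ya = (lam : ℂ) * (star v ⬝ᵥ ya) := by
    conv_lhs => rw [← hyP]
    rw [e1, hPv, smul_dot_aux]
    rw [star_mul', ← Matrix.star_dotProduct]
    simp [RCLike.star_def, Complex.conj_ofReal]
  have hc : star v ⬝ᵥ ya ≠ 0 := hi
  have hz : ((lam : ℂ) - 1) * (star v ⬝ᵥ ya) = 0 := by
    rw [sub_mul, one_mul, ← e2, sub_self]
  rcases mul_eq_zero.mp hz with h | h
  · have : (lam : ℂ) = 1 := by linear_combination h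
    exact_mod_cast this
  · exact absurd h hc

end Core

end RA


/-- The largest singular value of the realignment of `ρ̃` equals `1`. -/
theorem largest_sval_realign_rhoTilde_eq_one {dA dB : ℕ}
    (ρ : Matrix (Fin dA × Fin dB) (Fin dA × Fin dB) ℂ)
    (hρ : ρ.PosSemidef) (htr : ρ.trace = 1)
    (hA : IsUnit (margA ρ).det) (hB : IsUnit (margB ρ).det) :
    (svalsDesc (realign (rhoTilde ρ))).getD 0 0 = 1 := by
  unfold svalsDesc
  set hP := (Matrix.posSemidef_conjTranspose_mul_self (realign (rhoTilde ρ))).isHermitian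
    with hhP
  set m : Multiset ℝ := Finset.univ.val.map (fun i => Real.sqrt (hP.eigenvalues i)) with hm
  have hle : ∀ r ∈ m, r ≤ 1 := by
    intro r hr
    obtain ⟨i, _, rfl⟩ := Multiset.mem_map.mp hr
    have h := RA.eig_le_one ρ hρ hA hB i
    calc Real.sqrt _ ≤ Real.sqrt 1 := Real.sqrt_le_sqrt h
      _ = 1 := Real.sqrt_one
  have h1m : (1 : ℝ) ∈ m := by
    obtain ⟨i, hi⟩ := RA.exists_eig_one ρ hρ htr hA hB
    refine Multiset.mem_map.mpr ⟨i, Finset.mem_univ i, ?_⟩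
    show Real.sqrt (hP.eigenvalues i) = 1
    rw [hhP, hi, Real.sqrt_one]
  set L := Multiset.sort m (· ≤ ·) with hL
  have hsort : List.Pairwise (· ≤ ·) L := Multiset.pairwise_sort _ _
  have h1L : (1 : ℝ) ∈ L := (Multiset.mem_sort _).mpr h1m
  cases hrev : L.reverse with
  | nil =>
    exfalso
    have hnil : L = [] := List.reverse_eq_nil_iff.mp hrev
    rw [hnil] at h1L
    exact absurd h1L List.not_mem_nil
  | cons h t =>
    have hrevSorted : List.Pairwise (fun a b => b ≤ a) (h :: t) := by
      rw [← hrev]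
      exact List.pairwise_reverse.mpr hsort
    have hmax : ∀ x ∈ t, x ≤ h := (List.pairwise_cons.mp hrevSorted).1
    have hhL : h ∈ L := by
      have : h ∈ L.reverse := by rw [hrev]; exact List.mem_cons_self
      exact List.mem_reverse.mp this
    have hh1 : h ≤ 1 := hle h ((Multiset.mem_sort _).mp hhL)
    have h1h : 1 ≤ h := by
      have h1rev : (1 : ℝ) ∈ h :: t := by rw [← hrev]; exact List.mem_reverse.mpr h1L
      rcases List.mem_cons.mp h1rev with he | ht
      · exact le_of_eq he
      · exact hmax _ ht
    simpa using le_antisymm hh1 h1h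

end
end

section
/- For every density matrix ρ on the bipartite space indexed by Fin d_A × Fin d_B, the maximal correlation satisfies 0 ≤ μ(ρ) ≤ 1. -/
open Matrix
open scoped Kronecker ComplexOrder

noncomputable section

/-- The maximal correlation of a bipartite state: the supremum of `|tr(ρ (X ⊗ Yᴴ))|` over
`X`, `Y` with `tr(ρ_A X) = tr(ρ_B Y) = 0` and `tr(ρ_A X Xᴴ) = tr(ρ_B Y Yᴴ) = 1`. -/
def mu {α β : Type*} [Fintype α] [Fintype β] (ρ : Matrix (α × β) (α × β) ℂ) : ℝ :=
  sSup { r : ℝ | ∃ (X : Matrix α α ℂ) (Y : Matrix β β ℂ),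
    (margA ρ * X).trace = 0 ∧ (margB ρ * Y).trace = 0 ∧
    (margA ρ * X * Xᴴ).trace = 1 ∧ (margB ρ * Y * Yᴴ).trace = 1 ∧
    r = ‖(ρ * (X ⊗ₖ Yᴴ)).trace‖ }

/- Auxiliary lemmas -/

lemma kron_conjT {α β : Type*} (A : Matrix α α ℂ) (B : Matrix β β ℂ) :
    (A ⊗ₖ B)ᴴ = Aᴴ ⊗ₖ Bᴴ := by
  ext ⟨i, k⟩ ⟨j, l⟩
  simp [Matrix.conjTranspose_apply, Matrix.kroneckerMap_apply, star_mul']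

lemma trace_kron_one {α β : Type*} [Fintype α] [Fintype β] [DecidableEq β]
    (ρ : Matrix (α × β) (α × β) ℂ) (M : Matrix α α ℂ) :
    (ρ * (M ⊗ₖ (1 : Matrix β β ℂ))).trace = (margA ρ * M).trace := by
  simp only [Matrix.trace, Matrix.diag, Matrix.mul_apply, margA, Matrix.of_apply,
    Matrix.kroneckerMap_apply, Fintype.sum_prod_type, Matrix.one_apply, mul_ite, mul_one,
    mul_zero, Finset.sum_ite_eq', Finset.mem_univ, if_true]
  refine Finset.sum_congr rfl fun i _ => ?_
  rw [Finset.sum_comm]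
  exact Finset.sum_congr rfl fun j _ => (Finset.sum_mul ..).symm

lemma trace_one_kron {α β : Type*} [Fintype α] [Fintype β] [DecidableEq α]
    (ρ : Matrix (α × β) (α × β) ℂ) (N : Matrix β β ℂ) :
    (ρ * ((1 : Matrix α α ℂ) ⊗ₖ N)).trace = (margB ρ * N).trace := by
  simp only [Matrix.trace, Matrix.diag, Matrix.mul_apply, margB, Matrix.of_apply,
    Matrix.kroneckerMap_apply, Fintype.sum_prod_type, Matrix.one_apply, ite_mul, one_mul,
    zero_mul, mul_ite, mul_zero, Finset.sum_ite_eq', Finset.mem_univ, if_true]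
  have hinner : ∀ (x : α) (x1 : β), (∑ x2 : α, ∑ x3 : β,
      if x2 = x then ρ (x, x1) (x2, x3) * N x3 x1 else 0)
      = ∑ x3 : β, ρ (x, x1) (x, x3) * N x3 x1 := by
    intro x x1
    rw [Finset.sum_comm]
    simp
  simp only [hinner]
  rw [Finset.sum_comm]
  refine Finset.sum_congr rfl fun k _ => ?_
  rw [Finset.sum_comm]
  exact Finset.sum_congr rfl fun l _ => (Finset.sum_mul ..).symm

/-- Frobenius Cauchy–Schwarz in normalized form. -/
lemma abs_trace_mul_conjT_le {n : Type*} [Fintype n] (P Q : Matrix n n ℂ)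
    (hP : (P * Pᴴ).trace = 1) (hQ : (Q * Qᴴ).trace = 1) :
    ‖(P * Qᴴ).trace‖ ≤ 1 := by
  have htr : ∀ R S : Matrix n n ℂ,
      (R * Sᴴ).trace = ∑ p : n × n, R p.1 p.2 * (starRingEnd ℂ) (S p.1 p.2) := by
    intro R S
    simp [Matrix.trace, Matrix.diag, Matrix.mul_apply, Matrix.conjTranspose_apply,
      Fintype.sum_prod_type]
  have habs : ∀ R : Matrix n n ℂ, (R * Rᴴ).trace = 1 →
      ∑ p : n × n, ‖R p.1 p.2‖ ^ 2 = 1 := by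
    intro R hR
    have h1 : (∑ p : n × n, (Complex.normSq (R p.1 p.2) : ℂ)) = 1 := by
      rw [← hR, htr R R]
      exact Finset.sum_congr rfl fun p _ => (Complex.mul_conj _).symm
    have h2 := congrArg Complex.re h1
    simp only [Complex.re_sum, Complex.ofReal_re, Complex.one_re] at h2
    simpa only [Complex.sq_norm] using h2
  rw [htr]
  have step1 : ‖∑ p : n × n, P p.1 p.2 * (starRingEnd ℂ) (Q p.1 p.2)‖
      ≤ ∑ p : n × n, ‖P p.1 p.2‖ * ‖Q p.1 p.2‖ := by
    refine (norm_sum_le _ _).trans (le_of_eq ?_)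
    refine Finset.sum_congr rfl fun p _ => ?_
    rw [norm_mul, Complex.norm_conj]
  refine step1.trans ?_
  have cs := Finset.sum_mul_sq_le_sq_mul_sq Finset.univ
    (fun p : n × n => ‖P p.1 p.2‖) (fun p : n × n => ‖Q p.1 p.2‖)
  rw [habs P hP, habs Q hQ, one_mul] at cs
  have hnn : 0 ≤ ∑ p : n × n, ‖P p.1 p.2‖ * ‖Q p.1 p.2‖ :=
    Finset.sum_nonneg fun p _ => mul_nonneg (norm_nonneg _) (norm_nonneg _)
  nlinarith [cs, hnn]

/-- The maximal correlation of any bipartite density matrix lies between `0` and `1`. -/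
theorem mu_nonneg_le_one {dA dB : ℕ}
    (ρ : Matrix (Fin dA × Fin dB) (Fin dA × Fin dB) ℂ)
    (hρ : ρ.PosSemidef) (htr : ρ.trace = 1) :
    0 ≤ mu ρ ∧ mu ρ ≤ 1 := by
  have key : ∀ r ∈ { r : ℝ | ∃ (X : Matrix (Fin dA) (Fin dA) ℂ) (Y : Matrix (Fin dB) (Fin dB) ℂ),
      (margA ρ * X).trace = 0 ∧ (margB ρ * Y).trace = 0 ∧
      (margA ρ * X * Xᴴ).trace = 1 ∧ (margB ρ * Y * Yᴴ).trace = 1 ∧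
      r = ‖(ρ * (X ⊗ₖ Yᴴ)).trace‖ }, 0 ≤ r ∧ r ≤ 1 := by
    rintro r ⟨X, Y, -, -, hX, hY, rfl⟩
    refine ⟨norm_nonneg _, ?_⟩
    obtain ⟨B, hB⟩ : ∃ B : Matrix (Fin dA × Fin dB) (Fin dA × Fin dB) ℂ, ρ = Bᴴ * B := by
      open scoped MatrixOrder in exact CStarAlgebra.nonneg_iff_eq_star_mul_self.mp hρ.nonneg
    set P := B * (X ⊗ₖ (1 : Matrix (Fin dB) (Fin dB) ℂ)) with hPdef
    set Q := B * ((1 : Matrix (Fin dA) (Fin dA) ℂ) ⊗ₖ Y) with hQdef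
    have hPP : (P * Pᴴ).trace = 1 := by
      have hKK : (X ⊗ₖ (1 : Matrix (Fin dB) (Fin dB) ℂ)) *
          (X ⊗ₖ (1 : Matrix (Fin dB) (Fin dB) ℂ))ᴴ
          = (X * Xᴴ) ⊗ₖ (1 : Matrix (Fin dB) (Fin dB) ℂ) := by
        rw [kron_conjT, Matrix.conjTranspose_one, ← Matrix.mul_kronecker_mul, one_mul]
      calc (P * Pᴴ).trace
          = (B * ((X * Xᴴ) ⊗ₖ (1 : Matrix (Fin dB) (Fin dB) ℂ)) * Bᴴ).trace := by
            rw [hPdef, Matrix.conjTranspose_mul, Matrix.mul_assoc, ← Matrix.mul_assoc _ _ Bᴴ,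
              hKK, ← Matrix.mul_assoc, Matrix.mul_assoc B, ← Matrix.mul_assoc B]
        _ = (ρ * ((X * Xᴴ) ⊗ₖ (1 : Matrix (Fin dB) (Fin dB) ℂ))).trace := by
            rw [Matrix.trace_mul_cycle, ← hB]
        _ = (margA ρ * (X * Xᴴ)).trace := trace_kron_one ρ (X * Xᴴ)
        _ = 1 := by rw [← Matrix.mul_assoc]; exact hX
    have hQQ : (Q * Qᴴ).trace = 1 := by
      have hKK : ((1 : Matrix (Fin dA) (Fin dA) ℂ) ⊗ₖ Y) *
          ((1 : Matrix (Fin dA) (Fin dA) ℂ) ⊗ₖ Y)ᴴ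
          = (1 : Matrix (Fin dA) (Fin dA) ℂ) ⊗ₖ (Y * Yᴴ) := by
        rw [kron_conjT, Matrix.conjTranspose_one, ← Matrix.mul_kronecker_mul, one_mul]
      calc (Q * Qᴴ).trace
          = (B * ((1 : Matrix (Fin dA) (Fin dA) ℂ) ⊗ₖ (Y * Yᴴ)) * Bᴴ).trace := by
            rw [hQdef, Matrix.conjTranspose_mul, Matrix.mul_assoc, ← Matrix.mul_assoc _ _ Bᴴ,
              hKK, ← Matrix.mul_assoc, Matrix.mul_assoc B, ← Matrix.mul_assoc B]
        _ = (ρ * ((1 : Matrix (Fin dA) (Fin dA) ℂ) ⊗ₖ (Y * Yᴴ))).trace := by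
            rw [Matrix.trace_mul_cycle, ← hB]
        _ = (margB ρ * (Y * Yᴴ)).trace := trace_one_kron ρ (Y * Yᴴ)
        _ = 1 := by rw [← Matrix.mul_assoc]; exact hY
    have hPQ : (ρ * (X ⊗ₖ Yᴴ)).trace = (P * Qᴴ).trace := by
      have hKK : (X ⊗ₖ (1 : Matrix (Fin dB) (Fin dB) ℂ)) *
          ((1 : Matrix (Fin dA) (Fin dA) ℂ) ⊗ₖ Y)ᴴ = X ⊗ₖ Yᴴ := by
        rw [kron_conjT, Matrix.conjTranspose_one, ← Matrix.mul_kronecker_mul, one_mul, mul_one]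
      calc (ρ * (X ⊗ₖ Yᴴ)).trace
          = (Bᴴ * B * (X ⊗ₖ Yᴴ)).trace := by rw [← hB]
        _ = (B * (X ⊗ₖ Yᴴ) * Bᴴ).trace := (Matrix.trace_mul_cycle B (X ⊗ₖ Yᴴ) Bᴴ).symm
        _ = (P * Qᴴ).trace := by
            rw [hPdef, hQdef, Matrix.conjTranspose_mul]
            conv_rhs => rw [← Matrix.mul_assoc, Matrix.mul_assoc B, hKK]
    rw [hPQ]
    exact abs_trace_mul_conjT_le P Q hPP hQQ
  constructor
  · exact Real.sSup_nonneg fun x hx => (key x hx).1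
  · exact Real.sSup_le (fun x hx => (key x hx).2) zero_le_one

end
end

section
/- Let p₀₀, p₀₁, p₁₀, p₁₁ be nonnegative reals summing to 1 with p₀₀ > 0 and p₁₁ > 0, and suppose p₀₁ ≤ ε and p₁₀ ≤ ε for some ε ≥ 0. Let P̃ be the 2×2 real matrix with entries P̃ u v = p_{uv} / (√(p_{u0}+p_{u1}) · √(p_{0v}+p_{1v})). Then the second largest singular value of P̃ is at least 1 − ε/(p₀₀ p₁₁) − 2ε²/(p₀₀ p₁₁). -/
open Matrix
open scoped Kronecker ComplexOrder

noncomputable section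

lemma my_trace_eq_sum_eigenvalues {𝕜 : Type*} [RCLike 𝕜] {n : Type*} [Fintype n] [DecidableEq n]
    {A : Matrix n n 𝕜} (hA : A.IsHermitian) :
    A.trace = ∑ i, (hA.eigenvalues i : 𝕜) := by
  conv_lhs => rw [hA.spectral_theorem]
  rw [Unitary.conjStarAlgAut_apply]
  rw [Matrix.trace_mul_comm, ← mul_assoc]
  rw [(Matrix.mem_unitaryGroup_iff').mp (hA.eigenvectorUnitary).2]
  simp [Matrix.trace_diagonal]

lemma my_helper (a b c d : ℝ) (h0 : a+b ≠ 0) (h1 : c+d ≠ 0) (h2 : a+c ≠ 0) (h3 : b+d ≠ 0) :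
    a^2/((a+b)*(a+c)) + b^2/((a+b)*(b+d)) + c^2/((c+d)*(a+c)) + d^2/((c+d)*(b+d))
      = 1 + (a*d-b*c)^2/((a+b)*(c+d)*(a+c)*(b+d)) := by
  field_simp
  ring

lemma my_sq_div (x y z : ℝ) (hy : 0 ≤ y) (hz : 0 ≤ z) :
    (x/(Real.sqrt y * Real.sqrt z))*(x/(Real.sqrt y * Real.sqrt z)) = x^2/(y*z) := by
  rw [div_mul_div_comm, mul_mul_mul_comm, Real.mul_self_sqrt hy, Real.mul_self_sqrt hz, sq]

/-- A quantitative bound: if the off-diagonal probabilities are at most `ε`, the second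
largest singular value of `P̃` is at least `1 - ε/(p₀₀p₁₁) - 2ε²/(p₀₀p₁₁)`. -/
theorem second_sval_ge_of_small_offdiag (p : Fin 2 → Fin 2 → ℝ) (ε : ℝ) (hε : 0 ≤ ε)
    (hnn : ∀ u v, 0 ≤ p u v) (hsum : ∑ u, ∑ v, p u v = 1)
    (h00 : 0 < p 0 0) (h11 : 0 < p 1 1) (h01 : p 0 1 ≤ ε) (h10 : p 1 0 ≤ ε) :
    1 - ε / (p 0 0 * p 1 1) - 2 * ε ^ 2 / (p 0 0 * p 1 1) ≤
      (svalsDesc (Matrix.of fun u v : Fin 2 =>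
        p u v / (Real.sqrt (p u 0 + p u 1) * Real.sqrt (p 0 v + p 1 v)))).getD 1 0 := by
  set M : Matrix (Fin 2) (Fin 2) ℝ := Matrix.of fun u v : Fin 2 =>
        p u v / (Real.sqrt (p u 0 + p u 1) * Real.sqrt (p 0 v + p 1 v)) with hM
  set lam := (Matrix.posSemidef_conjTranspose_mul_self M).isHermitian.eigenvalues with hlam
  set c : ℝ := 1 - ε / (p 0 0 * p 1 1) - 2 * ε ^ 2 / (p 0 0 * p 1 1) with hc
  suffices key : ∀ i, c ≤ Real.sqrt (lam i) by
    have hlen : (svalsDesc M).length = 2 := by simp [svalsDesc]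
    have hmem : ∀ x ∈ svalsDesc M, ∃ i, x = Real.sqrt (lam i) := by
      intro x hx
      rw [svalsDesc, List.mem_reverse, Multiset.mem_sort] at hx
      obtain ⟨i, _, hi⟩ := Multiset.mem_map.mp hx
      exact ⟨i, hi.symm⟩
    rw [List.getD_eq_getElem (svalsDesc M) 0 (by omega)]
    obtain ⟨i, hi⟩ := hmem _ (List.getElem_mem _)
    rw [hi]; exact key i
  -- nonnegativity and marginals
  have hb := hnn 0 1
  have hcnn := hnn 1 0
  have hr0 : (0:ℝ) < p 0 0 + p 0 1 := by linarith
  have hr1 : (0:ℝ) < p 1 0 + p 1 1 := by linarith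
  have hc0 : (0:ℝ) < p 0 0 + p 1 0 := by linarith
  have hc1 : (0:ℝ) < p 0 1 + p 1 1 := by linarith
  have hsum4 : p 0 0 + p 0 1 + p 1 0 + p 1 1 = 1 := by
    have h := hsum
    simp [Fin.sum_univ_two] at h
    linarith
  -- entries of M
  have e00 : M 0 0 = p 0 0 / (Real.sqrt (p 0 0 + p 0 1) * Real.sqrt (p 0 0 + p 1 0)) := rfl
  have e01 : M 0 1 = p 0 1 / (Real.sqrt (p 0 0 + p 0 1) * Real.sqrt (p 0 1 + p 1 1)) := rfl
  have e10 : M 1 0 = p 1 0 / (Real.sqrt (p 1 0 + p 1 1) * Real.sqrt (p 0 0 + p 1 0)) := rfl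
  have e11 : M 1 1 = p 1 1 / (Real.sqrt (p 1 0 + p 1 1) * Real.sqrt (p 0 1 + p 1 1)) := rfl
  -- determinant of M
  have hdetM : M.det = (p 0 0 * p 1 1 - p 0 1 * p 1 0) /
      (Real.sqrt (p 0 0 + p 0 1) * Real.sqrt (p 1 0 + p 1 1) *
       Real.sqrt (p 0 0 + p 1 0) * Real.sqrt (p 0 1 + p 1 1)) := by
    rw [Matrix.det_fin_two, e00, e01, e10, e11]
    have u0 := Real.sqrt_ne_zero'.mpr hr0
    have u1 := Real.sqrt_ne_zero'.mpr hr1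
    have v0 := Real.sqrt_ne_zero'.mpr hc0
    have v1 := Real.sqrt_ne_zero'.mpr hc1
    field_simp
  have hdet2 : M.det^2 = (p 0 0 * p 1 1 - p 0 1 * p 1 0)^2 /
      ((p 0 0 + p 0 1) * (p 1 0 + p 1 1) * (p 0 0 + p 1 0) * (p 0 1 + p 1 1)) := by
    rw [hdetM, div_pow]
    congr 1
    rw [mul_pow, mul_pow, mul_pow, Real.sq_sqrt hr0.le, Real.sq_sqrt hr1.le,
      Real.sq_sqrt hc0.le, Real.sq_sqrt hc1.le]
  -- trace of MᴴM
  have htrace : (Mᴴ * M).trace = 1 + M.det^2 := by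
    have : (Mᴴ * M).trace = M 0 0 * M 0 0 + M 1 0 * M 1 0 + (M 0 1 * M 0 1 + M 1 1 * M 1 1) := by
      simp [Matrix.trace, Matrix.diag, Matrix.mul_apply, Matrix.conjTranspose_apply,
        Fin.sum_univ_two]
    rw [this, e00, e01, e10, e11, my_sq_div _ _ _ hr0.le hc0.le, my_sq_div _ _ _ hr1.le hc0.le,
      my_sq_div _ _ _ hr0.le hc1.le, my_sq_div _ _ _ hr1.le hc1.le, hdet2]
    have := my_helper (p 0 0) (p 0 1) (p 1 0) (p 1 1) hr0.ne' hr1.ne' hc0.ne' hc1.ne'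
    linarith [this]
  -- eigenvalue sum and product
  have hS : lam 0 + lam 1 = 1 + M.det^2 := by
    have h := my_trace_eq_sum_eigenvalues (Matrix.posSemidef_conjTranspose_mul_self M).isHermitian
    rw [htrace] at h
    simp [Fin.sum_univ_two] at h
    exact h.symm
  have hP : lam 0 * lam 1 = M.det^2 := by
    have h := Matrix.IsHermitian.det_eq_prod_eigenvalues
      (Matrix.posSemidef_conjTranspose_mul_self M).isHermitian
    rw [Matrix.det_mul, Matrix.det_conjTranspose, star_trivial] at h
    simp [Fin.prod_univ_two] at h
    rw [sq]; exact h.symm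
  have hkey : ∀ i, lam i = 1 ∨ lam i = M.det^2 := by
    intro i
    have h2 : (lam i - 1) * (lam i - M.det^2) = 0 := by
      fin_cases i
      · show (lam 0 - 1) * (lam 0 - M.det^2) = 0
        linear_combination lam 0 * hS - hP
      · show (lam 1 - 1) * (lam 1 - M.det^2) = 0
        linear_combination lam 1 * hS - hP
    rcases mul_eq_zero.mp h2 with h | h
    · left; linarith
    · right; linarith
  -- final analytic part
  intro i
  by_cases hbig : p 0 0 * p 1 1 ≤ ε + 2 * ε ^ 2
  · have hcle : c ≤ 0 := by
      have hX : 0 < p 0 0 * p 1 1 := mul_pos h00 h11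
      have h1 : 1 ≤ (ε + 2 * ε ^ 2) / (p 0 0 * p 1 1) := (one_le_div hX).mpr hbig
      have h2 : ε / (p 0 0 * p 1 1) + 2 * ε ^ 2 / (p 0 0 * p 1 1)
          = (ε + 2 * ε ^ 2) / (p 0 0 * p 1 1) := by ring
      rw [hc]; linarith
    exact le_trans hcle (Real.sqrt_nonneg _)
  · push_neg at hbig
    have hX : 0 < p 0 0 * p 1 1 := mul_pos h00 h11
    have hcpos : 0 < c := by
      have h1 : (ε + 2 * ε ^ 2) / (p 0 0 * p 1 1) < 1 := (div_lt_one hX).mpr hbig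
      have h2 : ε / (p 0 0 * p 1 1) + 2 * ε ^ 2 / (p 0 0 * p 1 1)
          = (ε + 2 * ε ^ 2) / (p 0 0 * p 1 1) := by ring
      rw [hc]; linarith
    have hcle1 : c ≤ 1 := by
      rw [hc]
      have : 0 ≤ ε / (p 0 0 * p 1 1) := by positivity
      have : 0 ≤ 2 * ε ^ 2 / (p 0 0 * p 1 1) := by positivity
      linarith
    -- bound det M from below by c
    have hK : (0:ℝ) < Real.sqrt (p 0 0 + p 0 1) * Real.sqrt (p 1 0 + p 1 1) *
        Real.sqrt (p 0 0 + p 1 0) * Real.sqrt (p 0 1 + p 1 1) := by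
      have := Real.sqrt_pos.mpr hr0
      have := Real.sqrt_pos.mpr hr1
      have := Real.sqrt_pos.mpr hc0
      have := Real.sqrt_pos.mpr hc1
      positivity
    have hKsq : (Real.sqrt (p 0 0 + p 0 1) * Real.sqrt (p 1 0 + p 1 1) *
        Real.sqrt (p 0 0 + p 1 0) * Real.sqrt (p 0 1 + p 1 1))^2
        = (p 0 0 + p 0 1) * (p 1 0 + p 1 1) * ((p 0 0 + p 1 0) * (p 0 1 + p 1 1)) := by
      rw [mul_pow, mul_pow, mul_pow, Real.sq_sqrt hr0.le, Real.sq_sqrt hr1.le,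
        Real.sq_sqrt hc0.le, Real.sq_sqrt hc1.le]
      ring
    set t : ℝ := ε * (p 0 0 + p 1 1) + ε ^ 2 with ht
    have htnn : 0 ≤ t := by positivity
    have hf1 : (p 0 0 + p 0 1) * (p 1 0 + p 1 1) ≤ p 0 0 * p 1 1 + t := by
      rw [ht]; nlinarith only [mul_le_mul h01 h10 hcnn hε, h01, h10, hε, hb, hcnn, h00.le, h11.le,
        mul_le_mul_of_nonneg_left h10 h00.le, mul_le_mul_of_nonneg_right h01 h11.le]
    have hf2 : (p 0 0 + p 1 0) * (p 0 1 + p 1 1) ≤ p 0 0 * p 1 1 + t := by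
      rw [ht]; nlinarith only [mul_le_mul h10 h01 hb hε, h01, h10, hε, hb, hcnn, h00.le, h11.le,
        mul_le_mul_of_nonneg_left h01 h00.le, mul_le_mul_of_nonneg_right h10 h11.le]
    have hKle : Real.sqrt (p 0 0 + p 0 1) * Real.sqrt (p 1 0 + p 1 1) *
        Real.sqrt (p 0 0 + p 1 0) * Real.sqrt (p 0 1 + p 1 1) ≤ p 0 0 * p 1 1 + t := by
      have hXt : (0:ℝ) < p 0 0 * p 1 1 + t := by positivity
      have hsq : (Real.sqrt (p 0 0 + p 0 1) * Real.sqrt (p 1 0 + p 1 1) *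
          Real.sqrt (p 0 0 + p 1 0) * Real.sqrt (p 0 1 + p 1 1))^2 ≤ (p 0 0 * p 1 1 + t)^2 := by
        rw [hKsq, sq]
        exact mul_le_mul hf1 hf2 (mul_nonneg hc0.le hc1.le) hXt.le
      nlinarith only [hsq, hK, hXt]
    have hpolykey : c * (p 0 0 * p 1 1 + t) ≤ p 0 0 * p 1 1 - p 0 1 * p 1 0 := by
      have hcval : c = (p 0 0 * p 1 1 - (ε + 2 * ε ^ 2)) / (p 0 0 * p 1 1) := by
        rw [hc]; field_simp; ring
      rw [hcval, div_mul_eq_mul_div, div_le_iff₀ hX, ht]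
      have had1 : p 0 0 + p 1 1 ≤ 1 := by linarith
      have T1 : 0 ≤ p 0 0 * p 1 1 * (ε^2 - p 0 1 * p 1 0) :=
        mul_nonneg hX.le (by nlinarith only [mul_le_mul h01 h10 hcnn hε])
      have T2 : 0 ≤ p 0 0 * p 1 1 * (ε * (1 - (p 0 0 + p 1 1))) :=
        mul_nonneg hX.le (mul_nonneg hε (by linarith))
      have T3 : 0 ≤ (ε + 2*ε^2) * (ε * (p 0 0 + p 1 1) + ε^2) :=
        mul_nonneg (by positivity) (by positivity)
      nlinarith only [T1, T2, T3]
    have hdetge : c ≤ M.det := by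
      rw [hdetM, le_div_iff₀ hK]
      calc c * (Real.sqrt (p 0 0 + p 0 1) * Real.sqrt (p 1 0 + p 1 1) *
            Real.sqrt (p 0 0 + p 1 0) * Real.sqrt (p 0 1 + p 1 1))
          ≤ c * (p 0 0 * p 1 1 + t) := by
            exact mul_le_mul_of_nonneg_left hKle hcpos.le
        _ ≤ p 0 0 * p 1 1 - p 0 1 * p 1 0 := hpolykey
    have hΔ : c^2 ≤ M.det^2 := by
      have := pow_le_pow_left₀ hcpos.le hdetge 2
      simpa using this
    rcases hkey i with h | h
    · rw [h, Real.sqrt_one]; exact hcle1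
    · rw [h]
      calc c = Real.sqrt (c^2) := (Real.sqrt_sq hcpos.le).symm
        _ ≤ Real.sqrt (M.det^2) := Real.sqrt_le_sqrt hΔ

end
end

section
/- Let v be a unit vector in the bipartite space indexed by Fin d_A × Fin d_B and let ρ = v vᴴ be the corresponding pure density matrix. If v is a product vector, i.e. v (i,k) = a i · b k for some vectors a, b, then μ(ρ) = 0; if v is not a product vector (v is entangled), then μ(ρ) = 1. -/
open Matrix
open scoped Kronecker ComplexOrder

noncomputable section

namespace MuAux

def rho {dA dB : ℕ} (v : Fin dA × Fin dB → ℂ) : Matrix (Fin dA × Fin dB) (Fin dA × Fin dB) ℂ :=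
  Matrix.of fun x y => v x * star (v y)

variable {dA dB : ℕ} (v : Fin dA × Fin dB → ℂ)


lemma trace_A1 (X : Matrix (Fin dA) (Fin dA) ℂ) :
    (margA (rho v) * X).trace = ∑ i, ∑ j, (∑ k, v (i,k) * star (v (j,k))) * X j i := by
  simp [Matrix.trace, Matrix.mul_apply, margA, rho, Matrix.diag]

lemma trace_A2 (Y : Matrix (Fin dB) (Fin dB) ℂ) :
    (margB (rho v) * Y).trace = ∑ k, ∑ l, (∑ i, v (i,k) * star (v (i,l))) * Y l k := by
  simp [Matrix.trace, Matrix.mul_apply, margB, rho, Matrix.diag]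

-- matrix route for A3
lemma margA_rho (v : Fin dA × Fin dB → ℂ) :
    margA (rho v) = (Matrix.of fun i k => v (i,k)) * (Matrix.of fun i k => v (i,k))ᴴ := by
  ext i j
  simp [margA, rho, Matrix.mul_apply, Matrix.conjTranspose_apply]

lemma margB_rho (v : Fin dA × Fin dB → ℂ) :
    margB (rho v) = (Matrix.of fun (k : Fin dB) (i : Fin dA) => v (i,k)) * (Matrix.of fun (k : Fin dB) (i : Fin dA) => v (i,k))ᴴ := by
  ext k l
  simp [margB, rho, Matrix.mul_apply, Matrix.conjTranspose_apply]

lemma trace_NNH {m n : Type*} [Fintype m] [Fintype n] (N : Matrix m n ℂ) :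
    (N * Nᴴ).trace = ∑ i, ∑ k, N i k * star (N i k) := by
  simp [Matrix.trace, Matrix.mul_apply, Matrix.conjTranspose_apply, Matrix.diag]

lemma trace_A3 (X : Matrix (Fin dA) (Fin dA) ℂ) :
    (margA (rho v) * X * Xᴴ).trace
      = ∑ m, ∑ k, (∑ i, star (X i m) * v (i,k)) * star (∑ i, star (X i m) * v (i,k)) := by
  set V := (Matrix.of fun i k => v (i,k)) with hV
  have h1 : (margA (rho v) * X * Xᴴ).trace = ((Xᴴ * V) * (Xᴴ * V)ᴴ).trace := by
    rw [margA_rho v, Matrix.conjTranspose_mul, Matrix.conjTranspose_conjTranspose, ← hV]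
    rw [Matrix.mul_assoc, Matrix.mul_assoc, Matrix.trace_mul_comm, Matrix.trace_mul_comm (Xᴴ * V)]
    rw [Matrix.mul_assoc, Matrix.mul_assoc, Matrix.mul_assoc]
  rw [h1, trace_NNH]
  refine Finset.sum_congr rfl fun m _ => Finset.sum_congr rfl fun k _ => ?_
  simp [Matrix.mul_apply, Matrix.conjTranspose_apply, hV]

lemma trace_A4 (Y : Matrix (Fin dB) (Fin dB) ℂ) :
    (margB (rho v) * Y * Yᴴ).trace
      = ∑ i, ∑ m, (∑ k, v (i,k) * star (Y k m)) * star (∑ k, v (i,k) * star (Y k m)) := by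
  set U := (Matrix.of fun (k : Fin dB) (i : Fin dA) => v (i,k)) with hU
  have h1 : (margB (rho v) * Y * Yᴴ).trace = ((Yᴴ * U) * (Yᴴ * U)ᴴ).trace := by
    rw [margB_rho v, Matrix.conjTranspose_mul, Matrix.conjTranspose_conjTranspose, ← hU]
    rw [Matrix.mul_assoc, Matrix.mul_assoc, Matrix.trace_mul_comm, Matrix.trace_mul_comm (Yᴴ * U)]
    rw [Matrix.mul_assoc, Matrix.mul_assoc, Matrix.mul_assoc]
  rw [h1, trace_NNH, Finset.sum_comm]
  refine Finset.sum_congr rfl fun i _ => Finset.sum_congr rfl fun m _ => ?_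
  have : (Yᴴ * U) m i = ∑ k, v (i,k) * star (Y k m) := by
    simp [Matrix.mul_apply, Matrix.conjTranspose_apply, hU, mul_comm]
  rw [this]

lemma sum3_rot {B C D : Type*} [Fintype B] [Fintype C] [Fintype D] (f : B → C → D → ℂ) :
    ∑ b, ∑ c, ∑ d, f b c d = ∑ d, ∑ c, ∑ b, f b c d :=
  calc ∑ b, ∑ c, ∑ d, f b c d = ∑ c, ∑ b, ∑ d, f b c d := Finset.sum_comm
    _ = ∑ c, ∑ d, ∑ b, f b c d := Finset.sum_congr rfl fun c _ => Finset.sum_comm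
    _ = ∑ d, ∑ c, ∑ b, f b c d := Finset.sum_comm

lemma trace_A5 (X : Matrix (Fin dA) (Fin dA) ℂ) (Y : Matrix (Fin dB) (Fin dB) ℂ) :
    ((rho v) * (X ⊗ₖ Yᴴ)).trace
      = ∑ j, ∑ l, star (∑ i, star (X i j) * v (i,l)) * (∑ k, v (j,k) * star (Y k l)) := by
  have hL : ((rho v) * (X ⊗ₖ Yᴴ)).trace
      = ∑ a, ∑ b, ∑ c, ∑ d, v (a,b) * star (v (c,d)) * X c a * star (Y b d) := by
    simp only [Matrix.trace, Matrix.diag, Matrix.mul_apply, rho, Matrix.of_apply,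
      Matrix.kroneckerMap_apply, Matrix.conjTranspose_apply]
    rw [Fintype.sum_prod_type]
    refine Finset.sum_congr rfl fun a _ => Finset.sum_congr rfl fun b _ => ?_
    rw [Fintype.sum_prod_type]
    exact Finset.sum_congr rfl fun c _ => Finset.sum_congr rfl fun d _ => by ring
  have hR : (∑ j, ∑ l, star (∑ i, star (X i j) * v (i,l)) * (∑ k, v (j,k) * star (Y k l)))
      = ∑ a, ∑ d, ∑ c, ∑ b, v (a,b) * star (v (c,d)) * X c a * star (Y b d) := by
    refine Finset.sum_congr rfl fun a _ => Finset.sum_congr rfl fun d _ => ?_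
    rw [star_sum, Finset.sum_mul_sum]
    exact Finset.sum_congr rfl fun c _ => Finset.sum_congr rfl fun b _ => by
      simp only [StarMul.star_mul, star_star]; ring
  rw [hL, hR]
  exact Finset.sum_congr rfl fun a _ => sum3_rot _

open scoped InnerProductSpace

lemma inner_eu {n : Type*} [Fintype n] (f g : EuclideanSpace ℂ n) :
    ⟪f, g⟫_ℂ = ∑ p, star (f p) * g p := by
  rw [PiLp.inner_apply]
  exact Finset.sum_congr rfl fun p _ => by rw [RCLike.inner_apply, starRingEnd_apply]; ring

lemma norm_one_of_inner {n : Type*} [Fintype n] (f : EuclideanSpace ℂ n)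
    (h : ⟪f, f⟫_ℂ = 1) : ‖f‖ = 1 := by
  have h3 : ‖f‖ ^ 2 = 1 := by
    rw [← inner_self_eq_norm_sq (𝕜 := ℂ) f, h]
    simp
  nlinarith [norm_nonneg f]

lemma key_bound (X : Matrix (Fin dA) (Fin dA) ℂ) (Y : Matrix (Fin dB) (Fin dB) ℂ)
    (h3 : (margA (rho v) * X * Xᴴ).trace = 1) (h4 : (margB (rho v) * Y * Yᴴ).trace = 1) :
    ‖((rho v) * (X ⊗ₖ Yᴴ)).trace‖ ≤ 1 := by
  classical
  let f : EuclideanSpace ℂ (Fin dA × Fin dB) := WithLp.toLp 2 (fun p : Fin dA × Fin dB => ∑ i, star (X i p.1) * v (i, p.2))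
  let g : EuclideanSpace ℂ (Fin dA × Fin dB) := WithLp.toLp 2 (fun p : Fin dA × Fin dB => ∑ k, v (p.1, k) * star (Y k p.2))
  have hinf : ⟪f, f⟫_ℂ = 1 := by
    rw [trace_A3] at h3
    rw [inner_eu, Fintype.sum_prod_type, ← h3]
    exact Finset.sum_congr rfl fun m _ => Finset.sum_congr rfl fun k _ => mul_comm _ _
  have hing : ⟪g, g⟫_ℂ = 1 := by
    rw [trace_A4] at h4
    rw [inner_eu, Fintype.sum_prod_type, ← h4]
    exact Finset.sum_congr rfl fun m _ => Finset.sum_congr rfl fun k _ => mul_comm _ _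
  have hT : ((rho v) * (X ⊗ₖ Yᴴ)).trace = ⟪f, g⟫_ℂ := by
    rw [trace_A5, inner_eu, Fintype.sum_prod_type]
  rw [hT]
  calc ‖⟪f, g⟫_ℂ‖ ≤ ‖f‖ * ‖g‖ := norm_inner_le_norm f g
    _ = 1 := by rw [norm_one_of_inner f hinf, norm_one_of_inner g hing]; ring

lemma quad_form (x : Fin dA → ℂ) :
    ∑ i, star (x i) * (∑ j, (∑ k, v (i,k) * star (v (j,k))) * x j)
      = ∑ k, (∑ i, star (x i) * v (i,k)) * star (∑ i, star (x i) * v (i,k)) := by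
  have hL : (∑ i, star (x i) * (∑ j, (∑ k, v (i,k) * star (v (j,k))) * x j))
      = ∑ i, ∑ j, ∑ k, star (x i) * v (i,k) * (x j * star (v (j,k))) := by
    refine Finset.sum_congr rfl fun i _ => ?_
    rw [Finset.mul_sum]
    refine Finset.sum_congr rfl fun j _ => ?_
    rw [Finset.sum_mul, Finset.mul_sum]
    exact Finset.sum_congr rfl fun k _ => by ring
  have hR : (∑ k, (∑ i, star (x i) * v (i,k)) * star (∑ i, star (x i) * v (i,k)))
      = ∑ k, ∑ i, ∑ j, star (x i) * v (i,k) * (x j * star (v (j,k))) := by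
    refine Finset.sum_congr rfl fun k _ => ?_
    rw [star_sum, Finset.sum_mul_sum]
    refine Finset.sum_congr rfl fun i _ => Finset.sum_congr rfl fun j _ => ?_
    simp only [StarMul.star_mul, star_star]
    ring
  rw [hL, hR, sum3_rot]
  exact Finset.sum_congr rfl fun k _ => Finset.sum_comm

lemma posSemidef_margA : (margA (rho v)).PosSemidef := by
  rw [Matrix.posSemidef_iff_dotProduct_mulVec]
  constructor
  · ext i j
    simp only [Matrix.conjTranspose_apply, margA, rho, Matrix.of_apply, star_sum,
      StarMul.star_mul, star_star]
  · intro x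
    have h : star x ⬝ᵥ (margA (rho v)) *ᵥ x
        = ∑ k, (∑ i, star (x i) * v (i,k)) * star (∑ i, star (x i) * v (i,k)) := by
      rw [← quad_form v x]
      simp only [dotProduct, Matrix.mulVec, margA, rho, Matrix.of_apply, Pi.star_apply]
    rw [h]
    exact Finset.sum_nonneg fun k _ => mul_star_self_nonneg _

lemma exists_two_eigen (hv : ∑ x, ‖v x‖ ^ 2 = 1)
    (hnp : ¬ ∃ (a : Fin dA → ℂ) (b : Fin dB → ℂ), ∀ i k, v (i, k) = a i * b k) :
    ∃ (s₁ s₂ : Fin dA → ℂ) (μ₁ μ₂ : ℝ), 0 < μ₁ ∧ 0 < μ₂ ∧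
      (∑ i, star (s₁ i) * s₁ i) = 1 ∧ (∑ i, star (s₂ i) * s₂ i) = 1 ∧
      (∑ i, star (s₁ i) * s₂ i) = 0 ∧ (∑ i, star (s₂ i) * s₁ i) = 0 ∧
      (∀ i, ∑ j, (∑ k, v (i,k) * star (v (j,k))) * s₁ j = (μ₁ : ℂ) * s₁ i) ∧
      (∀ i, ∑ j, (∑ k, v (i,k) * star (v (j,k))) * s₂ j = (μ₂ : ℂ) * s₂ i) := by
  classical
  have hP : (margA (rho v)).PosSemidef := posSemidef_margA v
  have hH : (margA (rho v)).IsHermitian := hP.1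
  set u := hH.eigenvectorBasis with hu
  set μ := hH.eigenvalues with hμdef
  have heig : ∀ m i, ∑ j, (∑ k, v (i,k) * star (v (j,k))) * (u m) j = (μ m : ℂ) * (u m) i := by
    intro m i
    have h := congrFun (hH.mulVec_eigenvectorBasis m) i
    rw [hu, hμdef]
    simpa [Matrix.mulVec, dotProduct, margA, rho, Pi.smul_apply,
      Complex.real_smul] using h
  have horth : ∀ m m', (∑ i, star ((u m) i) * (u m') i) = if m = m' then 1 else 0 := by
    intro m m'
    have h := orthonormal_iff_ite.mp (hH.eigenvectorBasis.orthonormal) m m'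
    rw [inner_eu] at h
    exact h
  by_cases hex : ∃ m₁ m₂, m₁ ≠ m₂ ∧ μ m₁ ≠ 0 ∧ μ m₂ ≠ 0
  · obtain ⟨m₁, m₂, hne, h1, h2⟩ := hex
    refine ⟨u m₁, u m₂, μ m₁, μ m₂,
      lt_of_le_of_ne (hP.eigenvalues_nonneg m₁) (Ne.symm h1),
      lt_of_le_of_ne (hP.eigenvalues_nonneg m₂) (Ne.symm h2), ?_, ?_, ?_, ?_, heig m₁, heig m₂⟩
    · rw [horth m₁ m₁, if_pos rfl]
    · rw [horth m₂ m₂, if_pos rfl]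
    · rw [horth m₁ m₂, if_neg hne]
    · rw [horth m₂ m₁, if_neg hne.symm]
  · exfalso
    apply hnp
    have hnonempty : Nonempty (Fin dA) := by
      by_contra h
      rw [not_nonempty_iff] at h
      simp [Finset.univ_eq_empty] at hv
    obtain ⟨m₀, hzero⟩ : ∃ m₀, ∀ m, m ≠ m₀ → μ m = 0 := by
      by_cases hex2 : ∃ m, μ m ≠ 0
      · obtain ⟨m₀, hm₀⟩ := hex2
        exact ⟨m₀, fun m hm => by_contra fun h => hex ⟨m, m₀, hm, h, hm₀⟩⟩
      · push_neg at hex2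
        exact ⟨Classical.arbitrary _, fun m _ => hex2 m⟩
    set z : Fin dA → Fin dB → ℂ := fun m k => ∑ i, star ((u m) i) * v (i,k) with hzdef
    have hz0 : ∀ m, m ≠ m₀ → ∀ k, z m k = 0 := by
      intro m hm
      have h0 : ∑ k, z m k * star (z m k) = 0 := by
        rw [← quad_form v (u m)]
        calc ∑ i, star ((u m) i) * (∑ j, (∑ k, v (i,k) * star (v (j,k))) * (u m) j)
            = ∑ i, star ((u m) i) * ((μ m : ℂ) * (u m) i) := by
              exact Finset.sum_congr rfl fun i _ => by rw [heig m i]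
          _ = 0 := by rw [hzero m hm]; simp
      have hr : ∑ k, Complex.normSq (z m k) = 0 := by
        have h1 : ((∑ k, Complex.normSq (z m k) : ℝ) : ℂ) = 0 := by
          push_cast
          rw [← h0]
          exact Finset.sum_congr rfl fun k _ => by
            rw [Complex.star_def, Complex.mul_conj]
        exact_mod_cast h1
      intro k
      have h2 := (Finset.sum_eq_zero_iff_of_nonneg
        (fun k _ => Complex.normSq_nonneg (z m k))).mp hr k (Finset.mem_univ k)
      exact Complex.normSq_eq_zero.mp h2
    refine ⟨fun i => (u m₀) i, fun k => z m₀ k, fun i k => ?_⟩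
    have hrepr := hH.eigenvectorBasis.sum_repr (WithLp.toLp 2 (fun i => v (i,k)) : EuclideanSpace ℂ (Fin dA))
    have hcoef : ∀ m, hH.eigenvectorBasis.repr (WithLp.toLp 2 (fun i => v (i,k)) : EuclideanSpace ℂ (Fin dA)) m
        = z m k := by
      intro m
      rw [hH.eigenvectorBasis.repr_apply_apply, inner_eu]
    have happ := congrFun (congrArg (fun (w : EuclideanSpace ℂ (Fin dA)) => (w : Fin dA → ℂ)) hrepr) i
    simp only [WithLp.ofLp_sum, WithLp.ofLp_smul, Finset.sum_apply, Pi.smul_apply, smul_eq_mul] at happ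
    rw [Finset.sum_congr rfl (fun m _ => by rw [hcoef m])] at happ
    rw [← happ, Finset.sum_eq_single m₀ (fun m _ hm => by rw [hz0 m hm k, zero_mul])
      (fun h => absurd (Finset.mem_univ m₀) h)]
    show z m₀ k * u m₀ i = u m₀ i * z m₀ k
    ring

lemma expand2 {A B : Type*} [Fintype A] [Fintype B] (a₁ a₂ c₁ c₂ : A → ℂ) (b₁ b₂ d₁ d₂ : B → ℂ) :
    (∑ x, ∑ y, (a₁ x * b₁ y + a₂ x * b₂ y) * (c₁ x * d₁ y + c₂ x * d₂ y))
    = (∑ x, a₁ x * c₁ x) * (∑ y, b₁ y * d₁ y) + (∑ x, a₁ x * c₂ x) * (∑ y, b₁ y * d₂ y)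
    + (∑ x, a₂ x * c₁ x) * (∑ y, b₂ y * d₁ y) + (∑ x, a₂ x * c₂ x) * (∑ y, b₂ y * d₂ y) := by
  simp_rw [Finset.sum_mul_sum, ← Finset.sum_add_distrib]
  exact Finset.sum_congr rfl fun x _ => Finset.sum_congr rfl fun y _ => by ring

lemma scale_sum {A : Type*} [Fintype A] (c c' : ℂ) (p q : A → ℂ) :
    ∑ m, (c * p m) * (c' * q m) = (c * c') * ∑ m, p m * q m := by
  rw [Finset.mul_sum]
  exact Finset.sum_congr rfl fun m _ => by ring

lemma collapse1 {A : Type*} [Fintype A] (Pm : A → A → ℂ) (s w : A → ℂ) (μ : ℂ)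
    (h : ∀ i, ∑ j, Pm i j * s j = μ * s i) :
    ∑ i, ∑ j, Pm i j * (s j * w i) = μ * ∑ i, w i * s i := by
  calc ∑ i, ∑ j, Pm i j * (s j * w i) = ∑ i, w i * ∑ j, Pm i j * s j := by
        refine Finset.sum_congr rfl fun i _ => ?_
        rw [Finset.mul_sum]
        exact Finset.sum_congr rfl fun j _ => by ring
    _ = ∑ i, w i * (μ * s i) := Finset.sum_congr rfl fun i _ => by rw [h i]
    _ = μ * ∑ i, w i * s i := by
        rw [Finset.mul_sum]
        exact Finset.sum_congr rfl fun i _ => by ring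

lemma collapse2 (s : Fin dA → ℂ) (t : Fin dB → ℂ) (μ : ℝ)
    (hF2 : ∀ i, ∑ k, v (i,k) * t k = (μ:ℂ) * s i) :
    ∑ k, ∑ l, (∑ i, v (i,k) * star (v (i,l))) * (star (t l) * t k)
      = (μ:ℂ)^2 * ∑ i, s i * star (s i) := by
  calc ∑ k, ∑ l, (∑ i, v (i,k) * star (v (i,l))) * (star (t l) * t k)
      = ∑ k, ∑ l, ∑ i, (v (i,k) * t k) * (star (v (i,l)) * star (t l)) := by
        refine Finset.sum_congr rfl fun k _ => Finset.sum_congr rfl fun l _ => ?_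
        rw [Finset.sum_mul]
        exact Finset.sum_congr rfl fun i _ => by ring
    _ = ∑ i, ∑ l, ∑ k, (v (i,k) * t k) * (star (v (i,l)) * star (t l)) := sum3_rot _
    _ = ∑ i, ∑ k, ∑ l, (v (i,k) * t k) * (star (v (i,l)) * star (t l)) :=
        Finset.sum_congr rfl fun i _ => Finset.sum_comm
    _ = ∑ i, (∑ k, v (i,k) * t k) * (∑ l, star (v (i,l)) * star (t l)) := by
        refine Finset.sum_congr rfl fun i _ => ?_
        rw [Finset.sum_mul_sum]
    _ = ∑ i, ((μ:ℂ) * s i) * star ((μ:ℂ) * s i) := by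
        refine Finset.sum_congr rfl fun i _ => ?_
        rw [hF2 i]
        congr 1
        rw [← hF2 i, star_sum]
        exact Finset.sum_congr rfl fun l _ => by
          simp only [StarMul.star_mul, star_star]; ring
    _ = (μ:ℂ)^2 * ∑ i, s i * star (s i) := by
        rw [Finset.mul_sum]
        refine Finset.sum_congr rfl fun i _ => ?_
        simp only [StarMul.star_mul, Complex.star_def, Complex.conj_ofReal]
        ring

lemma exists_one (hv : ∑ x, ‖v x‖ ^ 2 = 1)
    (hnp : ¬ ∃ (a : Fin dA → ℂ) (b : Fin dB → ℂ), ∀ i k, v (i, k) = a i * b k) :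
    ∃ (X : Matrix (Fin dA) (Fin dA) ℂ) (Y : Matrix (Fin dB) (Fin dB) ℂ),
      (margA (rho v) * X).trace = 0 ∧ (margB (rho v) * Y).trace = 0 ∧
      (margA (rho v) * X * Xᴴ).trace = 1 ∧ (margB (rho v) * Y * Yᴴ).trace = 1 ∧
      ((rho v) * (X ⊗ₖ Yᴴ)).trace = 1 := by
  classical
  obtain ⟨s₁, s₂, μ₁, μ₂, hμ₁, hμ₂, hn₁, hn₂, ho₁₂, ho₂₁, he₁, he₂⟩ :=
    exists_two_eigen v hv hnp
  -- real coefficients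
  set c : ℝ := (Real.sqrt (μ₁ * μ₂ * (μ₁ + μ₂)))⁻¹ with hcdef
  set α₁ : ℝ := c * μ₂ with hα₁
  set α₂ : ℝ := -(c * μ₁) with hα₂
  have hx : (0:ℝ) < μ₁ * μ₂ * (μ₁ + μ₂) := by positivity
  have hc2 : c^2 * (μ₁ * μ₂ * (μ₁ + μ₂)) = 1 := by
    have hs : Real.sqrt (μ₁ * μ₂ * (μ₁ + μ₂)) ^ 2 = μ₁ * μ₂ * (μ₁ + μ₂) :=
      Real.sq_sqrt hx.le
    rw [hcdef, inv_pow, hs]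
    exact inv_mul_cancel₀ hx.ne'
  have hsum0 : μ₁ * α₁ + μ₂ * α₂ = 0 := by rw [hα₁, hα₂]; ring
  have hsum1 : μ₁ * α₁^2 + μ₂ * α₂^2 = 1 := by
    rw [hα₁, hα₂]; linear_combination hc2
  set β₁ : ℝ := α₁ / μ₁ with hβ₁def
  set β₂ : ℝ := α₂ / μ₂ with hβ₂def
  have hβ₁ : β₁ * μ₁ = α₁ := div_mul_cancel₀ _ hμ₁.ne'
  have hβ₂ : β₂ * μ₂ = α₂ := div_mul_cancel₀ _ hμ₂.ne'
  -- the t vectors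
  set t₁ : Fin dB → ℂ := fun k => ∑ i, star (v (i,k)) * s₁ i with ht₁def
  set t₂ : Fin dB → ℂ := fun k => ∑ i, star (v (i,k)) * s₂ i with ht₂def
  have hst : ∀ (s : Fin dA → ℂ) (k : Fin dB),
      star (∑ i, star (v (i,k)) * s i) = ∑ i, star (s i) * v (i,k) := by
    intro s k
    rw [star_sum]
    exact Finset.sum_congr rfl fun i _ => by
      simp only [StarMul.star_mul, star_star]
  -- F2 facts
  have key2 : ∀ (s : Fin dA → ℂ) (μ : ℝ),
      (∀ i, ∑ j, (∑ k, v (i,k) * star (v (j,k))) * s j = (μ:ℂ) * s i) →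
      ∀ i, ∑ k, v (i,k) * (∑ i', star (v (i',k)) * s i') = (μ:ℂ) * s i := by
    intro s μ he i
    calc ∑ k, v (i,k) * (∑ j, star (v (j,k)) * s j)
        = ∑ k, ∑ j, (v (i,k) * star (v (j,k))) * s j := by
          refine Finset.sum_congr rfl fun k _ => ?_
          rw [Finset.mul_sum]
          exact Finset.sum_congr rfl fun j _ => by ring
      _ = ∑ j, ∑ k, (v (i,k) * star (v (j,k))) * s j := Finset.sum_comm
      _ = ∑ j, (∑ k, v (i,k) * star (v (j,k))) * s j := by
          refine Finset.sum_congr rfl fun j _ => ?_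
          rw [Finset.sum_mul]
      _ = (μ:ℂ) * s i := he i
  have hF2₁ : ∀ i, ∑ k, v (i,k) * t₁ k = (μ₁:ℂ) * s₁ i := key2 s₁ μ₁ he₁
  have hF2₂ : ∀ i, ∑ k, v (i,k) * t₂ k = (μ₂:ℂ) * s₂ i := key2 s₂ μ₂ he₂
  -- t inner products
  have keyT : ∀ (sa sb : Fin dA → ℂ) (ta tb : Fin dB → ℂ) (μb : ℝ),
      (∀ k, ta k = ∑ i, star (v (i,k)) * sa i) →
      (∀ i, ∑ k, v (i,k) * tb k = (μb:ℂ) * sb i) →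
      ∑ k, star (ta k) * tb k = (μb:ℂ) * ∑ i, star (sa i) * sb i := by
    intro sa sb ta tb μb hta htb
    calc ∑ k, star (ta k) * tb k
        = ∑ k, (∑ i, star (sa i) * v (i,k)) * tb k := by
          refine Finset.sum_congr rfl fun k _ => ?_
          rw [hta k, hst sa k]
      _ = ∑ k, ∑ i, star (sa i) * (v (i,k) * tb k) := by
          refine Finset.sum_congr rfl fun k _ => ?_
          rw [Finset.sum_mul]
          exact Finset.sum_congr rfl fun i _ => by ring
      _ = ∑ i, ∑ k, star (sa i) * (v (i,k) * tb k) := Finset.sum_comm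
      _ = ∑ i, star (sa i) * ((μb:ℂ) * sb i) := by
          refine Finset.sum_congr rfl fun i _ => ?_
          rw [← Finset.mul_sum, htb i]
      _ = (μb:ℂ) * ∑ i, star (sa i) * sb i := by
          rw [Finset.mul_sum]
          exact Finset.sum_congr rfl fun i _ => by ring
  have htt₁₁ : ∑ k, star (t₁ k) * t₁ k = (μ₁:ℂ) := by
    rw [keyT s₁ s₁ t₁ t₁ μ₁ (fun k => rfl) hF2₁, hn₁, mul_one]
  have htt₂₂ : ∑ k, star (t₂ k) * t₂ k = (μ₂:ℂ) := by
    rw [keyT s₂ s₂ t₂ t₂ μ₂ (fun k => rfl) hF2₂, hn₂, mul_one]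
  have htt₁₂ : ∑ k, star (t₁ k) * t₂ k = 0 := by
    rw [keyT s₁ s₂ t₁ t₂ μ₂ (fun k => rfl) hF2₂, ho₁₂, mul_zero]
  have htt₂₁ : ∑ k, star (t₂ k) * t₁ k = 0 := by
    rw [keyT s₂ s₁ t₂ t₁ μ₁ (fun k => rfl) hF2₁, ho₂₁, mul_zero]
  -- reversed order sums
  have hn₁' : ∑ i, s₁ i * star (s₁ i) = 1 := by
    rw [← hn₁]; exact Finset.sum_congr rfl fun i _ => mul_comm _ _
  have hn₂' : ∑ i, s₂ i * star (s₂ i) = 1 := by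
    rw [← hn₂]; exact Finset.sum_congr rfl fun i _ => mul_comm _ _
  have ho₁₂' : ∑ i, s₁ i * star (s₂ i) = 0 := by
    rw [← ho₂₁]; exact Finset.sum_congr rfl fun i _ => mul_comm _ _
  have ho₂₁' : ∑ i, s₂ i * star (s₁ i) = 0 := by
    rw [← ho₁₂]; exact Finset.sum_congr rfl fun i _ => mul_comm _ _
  have htt₁₁' : ∑ k, t₁ k * star (t₁ k) = (μ₁:ℂ) := by
    rw [← htt₁₁]; exact Finset.sum_congr rfl fun k _ => mul_comm _ _
  have htt₂₂' : ∑ k, t₂ k * star (t₂ k) = (μ₂:ℂ) := by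
    rw [← htt₂₂]; exact Finset.sum_congr rfl fun k _ => mul_comm _ _
  have htt₁₂' : ∑ k, t₁ k * star (t₂ k) = 0 := by
    rw [← htt₂₁]; exact Finset.sum_congr rfl fun k _ => mul_comm _ _
  have htt₂₁' : ∑ k, t₂ k * star (t₁ k) = 0 := by
    rw [← htt₁₂]; exact Finset.sum_congr rfl fun k _ => mul_comm _ _
  -- the matrices
  set X : Matrix (Fin dA) (Fin dA) ℂ := Matrix.of fun r c' =>
    (α₁:ℂ) * (s₁ r * star (s₁ c')) + (α₂:ℂ) * (s₂ r * star (s₂ c')) with hXdef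
  set Y : Matrix (Fin dB) (Fin dB) ℂ := Matrix.of fun k l =>
    (β₁:ℂ) * (star (t₁ k) * t₁ l) + (β₂:ℂ) * (star (t₂ k) * t₂ l) with hYdef
  have hst₁ : ∀ k, star (t₁ k) = ∑ i, star (s₁ i) * v (i,k) := fun k => hst s₁ k
  have hst₂ : ∀ k, star (t₂ k) = ∑ i, star (s₂ i) * v (i,k) := fun k => hst s₂ k
  have hfX : ∀ m k, (∑ i, star (X i m) * v (i,k))
      = ((α₁:ℂ) * s₁ m) * star (t₁ k) + ((α₂:ℂ) * s₂ m) * star (t₂ k) := by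
    intro m k
    have hXe : ∀ i, star (X i m)
        = (α₁:ℂ) * (star (s₁ i) * s₁ m) + (α₂:ℂ) * (star (s₂ i) * s₂ m) := by
      intro i
      show star ((α₁:ℂ) * (s₁ i * star (s₁ m)) + (α₂:ℂ) * (s₂ i * star (s₂ m))) = _
      simp only [star_add, StarMul.star_mul, star_star, Complex.star_def, Complex.conj_conj, Complex.conj_ofReal]
      ring
    calc ∑ i, star (X i m) * v (i,k)
        = ∑ i, (((α₁:ℂ) * s₁ m) * (star (s₁ i) * v (i,k))
            + ((α₂:ℂ) * s₂ m) * (star (s₂ i) * v (i,k))) := by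
          refine Finset.sum_congr rfl fun i _ => ?_
          rw [hXe i]; ring
      _ = ((α₁:ℂ) * s₁ m) * (∑ i, star (s₁ i) * v (i,k))
          + ((α₂:ℂ) * s₂ m) * (∑ i, star (s₂ i) * v (i,k)) := by
          rw [Finset.sum_add_distrib, Finset.mul_sum, Finset.mul_sum]
      _ = ((α₁:ℂ) * s₁ m) * star (t₁ k) + ((α₂:ℂ) * s₂ m) * star (t₂ k) := by
          rw [hst₁ k, hst₂ k]
  have hgY : ∀ i m, (∑ k, v (i,k) * star (Y k m))
      = ((α₁:ℂ) * s₁ i) * star (t₁ m) + ((α₂:ℂ) * s₂ i) * star (t₂ m) := by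
    intro i m
    have hYe : ∀ k, star (Y k m)
        = (β₁:ℂ) * (t₁ k * star (t₁ m)) + (β₂:ℂ) * (t₂ k * star (t₂ m)) := by
      intro k
      show star ((β₁:ℂ) * (star (t₁ k) * t₁ m) + (β₂:ℂ) * (star (t₂ k) * t₂ m)) = _
      simp only [star_add, StarMul.star_mul, star_star, Complex.star_def, Complex.conj_conj, Complex.conj_ofReal]
      ring
    have b1 : (β₁:ℂ) * (μ₁:ℂ) = (α₁:ℂ) := by rw [← Complex.ofReal_mul, hβ₁]
    have b2 : (β₂:ℂ) * (μ₂:ℂ) = (α₂:ℂ) := by rw [← Complex.ofReal_mul, hβ₂]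
    calc ∑ k, v (i,k) * star (Y k m)
        = ∑ k, (((β₁:ℂ) * star (t₁ m)) * (v (i,k) * t₁ k)
            + ((β₂:ℂ) * star (t₂ m)) * (v (i,k) * t₂ k)) := by
          refine Finset.sum_congr rfl fun k _ => ?_
          rw [hYe k]; ring
      _ = ((β₁:ℂ) * star (t₁ m)) * (∑ k, v (i,k) * t₁ k)
          + ((β₂:ℂ) * star (t₂ m)) * (∑ k, v (i,k) * t₂ k) := by
          rw [Finset.sum_add_distrib, Finset.mul_sum, Finset.mul_sum]
      _ = ((β₁:ℂ) * star (t₁ m)) * ((μ₁:ℂ) * s₁ i)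
          + ((β₂:ℂ) * star (t₂ m)) * ((μ₂:ℂ) * s₂ i) := by
          rw [hF2₁ i, hF2₂ i]
      _ = ((α₁:ℂ) * s₁ i) * star (t₁ m) + ((α₂:ℂ) * s₂ i) * star (t₂ m) := by
          rw [← b1, ← b2]; ring
  refine ⟨X, Y, ?_, ?_, ?_, ?_, ?_⟩
  · -- tr(margA X) = 0
    rw [trace_A1]
    calc ∑ i, ∑ j, (∑ k, v (i,k) * star (v (j,k))) * X j i
        = (∑ i, ∑ j, (∑ k, v (i,k) * star (v (j,k))) * (s₁ j * ((α₁:ℂ) * star (s₁ i))))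
          + (∑ i, ∑ j, (∑ k, v (i,k) * star (v (j,k))) * (s₂ j * ((α₂:ℂ) * star (s₂ i)))) := by
          rw [← Finset.sum_add_distrib]
          refine Finset.sum_congr rfl fun i _ => ?_
          rw [← Finset.sum_add_distrib]
          refine Finset.sum_congr rfl fun j _ => ?_
          show _ * ((α₁:ℂ) * (s₁ j * star (s₁ i)) + (α₂:ℂ) * (s₂ j * star (s₂ i))) = _
          ring
      _ = (μ₁:ℂ) * ∑ i, ((α₁:ℂ) * star (s₁ i)) * s₁ i
          + (μ₂:ℂ) * ∑ i, ((α₂:ℂ) * star (s₂ i)) * s₂ i := by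
          rw [collapse1 _ s₁ _ _ he₁, collapse1 _ s₂ _ _ he₂]
      _ = (μ₁:ℂ) * ((α₁:ℂ) * ∑ i, star (s₁ i) * s₁ i)
          + (μ₂:ℂ) * ((α₂:ℂ) * ∑ i, star (s₂ i) * s₂ i) := by
          simp only [Finset.mul_sum]
          exact congrArg₂ (· + ·) (Finset.sum_congr rfl fun i _ => by ring)
            (Finset.sum_congr rfl fun i _ => by ring)
      _ = ((μ₁ * α₁ + μ₂ * α₂ : ℝ) : ℂ) := by rw [hn₁, hn₂]; push_cast; ring
      _ = 0 := by rw [hsum0]; norm_num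
  · -- tr(margB Y) = 0
    rw [trace_A2]
    calc ∑ k, ∑ l, (∑ i, v (i,k) * star (v (i,l))) * Y l k
        = (β₁:ℂ) * ∑ k, ∑ l, (∑ i, v (i,k) * star (v (i,l))) * (star (t₁ l) * t₁ k)
          + (β₂:ℂ) * ∑ k, ∑ l, (∑ i, v (i,k) * star (v (i,l))) * (star (t₂ l) * t₂ k) := by
          simp only [Finset.mul_sum, ← Finset.sum_add_distrib]
          refine Finset.sum_congr rfl fun k _ => Finset.sum_congr rfl fun l _ => ?_
          show _ * ((β₁:ℂ) * (star (t₁ l) * t₁ k) + (β₂:ℂ) * (star (t₂ l) * t₂ k)) = _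
          ring
      _ = (β₁:ℂ) * ((μ₁:ℂ)^2 * ∑ i, s₁ i * star (s₁ i))
          + (β₂:ℂ) * ((μ₂:ℂ)^2 * ∑ i, s₂ i * star (s₂ i)) := by
          rw [collapse2 v s₁ t₁ μ₁ hF2₁, collapse2 v s₂ t₂ μ₂ hF2₂]
      _ = ((β₁ * μ₁^2 + β₂ * μ₂^2 : ℝ) : ℂ) := by rw [hn₁', hn₂']; push_cast; ring
      _ = 0 := by
          have : β₁ * μ₁^2 + β₂ * μ₂^2 = 0 := by
            have e1 : β₁ * μ₁^2 = μ₁ * α₁ := by rw [← hβ₁]; ring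
            have e2 : β₂ * μ₂^2 = μ₂ * α₂ := by rw [← hβ₂]; ring
            rw [e1, e2]
            linarith [hsum0]
          rw [this]; norm_num
  · -- tr(margA X Xᴴ) = 1
    rw [trace_A3]
    calc ∑ m, ∑ k, (∑ i, star (X i m) * v (i,k)) * star (∑ i, star (X i m) * v (i,k))
        = ∑ m, ∑ k, (((α₁:ℂ) * s₁ m) * star (t₁ k) + ((α₂:ℂ) * s₂ m) * star (t₂ k))
            * (((α₁:ℂ) * star (s₁ m)) * t₁ k + ((α₂:ℂ) * star (s₂ m)) * t₂ k) := by
          refine Finset.sum_congr rfl fun m _ => Finset.sum_congr rfl fun k _ => ?_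
          rw [hfX m k]
          congr 1
          simp only [star_add, StarMul.star_mul, star_star, Complex.star_def, Complex.conj_conj,
            Complex.conj_ofReal]
          ring
      _ = (∑ m, ((α₁:ℂ) * s₁ m) * ((α₁:ℂ) * star (s₁ m))) * (∑ k, star (t₁ k) * t₁ k)
          + (∑ m, ((α₁:ℂ) * s₁ m) * ((α₂:ℂ) * star (s₂ m))) * (∑ k, star (t₁ k) * t₂ k)
          + (∑ m, ((α₂:ℂ) * s₂ m) * ((α₁:ℂ) * star (s₁ m))) * (∑ k, star (t₂ k) * t₁ k)
          + (∑ m, ((α₂:ℂ) * s₂ m) * ((α₂:ℂ) * star (s₂ m))) * (∑ k, star (t₂ k) * t₂ k) :=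
          expand2 (fun m => (α₁:ℂ) * s₁ m) (fun m => (α₂:ℂ) * s₂ m)
            (fun m => (α₁:ℂ) * star (s₁ m)) (fun m => (α₂:ℂ) * star (s₂ m))
            (fun k => star (t₁ k)) (fun k => star (t₂ k)) t₁ t₂
      _ = ((μ₁ * α₁^2 + μ₂ * α₂^2 : ℝ) : ℂ) := by
          rw [scale_sum, scale_sum, scale_sum, scale_sum, htt₁₁, htt₁₂, htt₂₁, htt₂₂,
            hn₁', hn₂', ho₁₂', ho₂₁']
          push_cast
          ring
      _ = 1 := by rw [hsum1]; norm_num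
  · -- tr(margB Y Yᴴ) = 1
    rw [trace_A4]
    calc ∑ i, ∑ m, (∑ k, v (i,k) * star (Y k m)) * star (∑ k, v (i,k) * star (Y k m))
        = ∑ i, ∑ m, (((α₁:ℂ) * s₁ i) * star (t₁ m) + ((α₂:ℂ) * s₂ i) * star (t₂ m))
            * (((α₁:ℂ) * star (s₁ i)) * t₁ m + ((α₂:ℂ) * star (s₂ i)) * t₂ m) := by
          refine Finset.sum_congr rfl fun i _ => Finset.sum_congr rfl fun m _ => ?_
          rw [hgY i m]
          congr 1
          simp only [star_add, StarMul.star_mul, star_star, Complex.star_def, Complex.conj_conj,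
            Complex.conj_ofReal]
          ring
      _ = (∑ i, ((α₁:ℂ) * s₁ i) * ((α₁:ℂ) * star (s₁ i))) * (∑ m, star (t₁ m) * t₁ m)
          + (∑ i, ((α₁:ℂ) * s₁ i) * ((α₂:ℂ) * star (s₂ i))) * (∑ m, star (t₁ m) * t₂ m)
          + (∑ i, ((α₂:ℂ) * s₂ i) * ((α₁:ℂ) * star (s₁ i))) * (∑ m, star (t₂ m) * t₁ m)
          + (∑ i, ((α₂:ℂ) * s₂ i) * ((α₂:ℂ) * star (s₂ i))) * (∑ m, star (t₂ m) * t₂ m) :=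
          expand2 (fun i => (α₁:ℂ) * s₁ i) (fun i => (α₂:ℂ) * s₂ i)
            (fun i => (α₁:ℂ) * star (s₁ i)) (fun i => (α₂:ℂ) * star (s₂ i))
            (fun m => star (t₁ m)) (fun m => star (t₂ m)) t₁ t₂
      _ = ((μ₁ * α₁^2 + μ₂ * α₂^2 : ℝ) : ℂ) := by
          rw [scale_sum, scale_sum, scale_sum, scale_sum, htt₁₁, htt₁₂, htt₂₁, htt₂₂,
            hn₁', hn₂', ho₁₂', ho₂₁']
          push_cast
          ring
      _ = 1 := by rw [hsum1]; norm_num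
  · -- the value is 1
    rw [trace_A5]
    calc ∑ j, ∑ l, star (∑ i, star (X i j) * v (i,l)) * (∑ k, v (j,k) * star (Y k l))
        = ∑ j, ∑ l, (((α₁:ℂ) * star (s₁ j)) * t₁ l + ((α₂:ℂ) * star (s₂ j)) * t₂ l)
            * (((α₁:ℂ) * s₁ j) * star (t₁ l) + ((α₂:ℂ) * s₂ j) * star (t₂ l)) := by
          refine Finset.sum_congr rfl fun j _ => Finset.sum_congr rfl fun l _ => ?_
          rw [hfX j l, hgY j l]
          congr 1
          simp only [star_add, StarMul.star_mul, star_star, Complex.star_def, Complex.conj_conj,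
            Complex.conj_ofReal]
          ring
      _ = (∑ j, ((α₁:ℂ) * star (s₁ j)) * ((α₁:ℂ) * s₁ j)) * (∑ l, t₁ l * star (t₁ l))
          + (∑ j, ((α₁:ℂ) * star (s₁ j)) * ((α₂:ℂ) * s₂ j)) * (∑ l, t₁ l * star (t₂ l))
          + (∑ j, ((α₂:ℂ) * star (s₂ j)) * ((α₁:ℂ) * s₁ j)) * (∑ l, t₂ l * star (t₁ l))
          + (∑ j, ((α₂:ℂ) * star (s₂ j)) * ((α₂:ℂ) * s₂ j)) * (∑ l, t₂ l * star (t₂ l)) :=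
          expand2 (fun j => (α₁:ℂ) * star (s₁ j)) (fun j => (α₂:ℂ) * star (s₂ j))
            (fun j => (α₁:ℂ) * s₁ j) (fun j => (α₂:ℂ) * s₂ j)
            t₁ t₂ (fun l => star (t₁ l)) (fun l => star (t₂ l))
      _ = ((μ₁ * α₁^2 + μ₂ * α₂^2 : ℝ) : ℂ) := by
          rw [scale_sum, scale_sum, scale_sum, scale_sum, htt₁₁', htt₁₂', htt₂₁', htt₂₂',
            hn₁, hn₂, ho₁₂, ho₂₁]
          push_cast
          ring
      _ = 1 := by rw [hsum1]; norm_num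


end MuAux

open MuAux in
/-- For a pure state: `μ = 0` if the vector is a product vector, and `μ = 1` otherwise. -/
theorem mu_pure_state {dA dB : ℕ} (v : Fin dA × Fin dB → ℂ)
    (hv : ∑ x, ‖v x‖ ^ 2 = 1) :
    ((∃ (a : Fin dA → ℂ) (b : Fin dB → ℂ), ∀ i k, v (i, k) = a i * b k) →
      mu (Matrix.of fun x y => v x * star (v y)) = 0) ∧
    ((¬ ∃ (a : Fin dA → ℂ) (b : Fin dB → ℂ), ∀ i k, v (i, k) = a i * b k) →
      mu (Matrix.of fun x y => v x * star (v y)) = 1) := by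
  have hrho : (Matrix.of fun x y => v x * star (v y)) = rho v := rfl
  constructor
  · rintro ⟨a, b, hab⟩
    rw [hrho]
    unfold mu
    have hbnz : (∑ k, b k * star (b k)) ≠ 0 := by
      intro h0
      have h0' : ∑ k, Complex.normSq (b k) = 0 := by
        have h1 : ((∑ k, Complex.normSq (b k) : ℝ) : ℂ) = 0 := by
          push_cast
          rw [← h0]
          exact Finset.sum_congr rfl fun k _ => by rw [Complex.star_def, Complex.mul_conj]
        exact_mod_cast h1
      have hb0 : ∀ k, b k = 0 := fun k => Complex.normSq_eq_zero.mp
        ((Finset.sum_eq_zero_iff_of_nonneg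
          (fun k _ => Complex.normSq_nonneg _)).mp h0' k (Finset.mem_univ k))
      have hzero : ∑ x, ‖v x‖ ^ 2 = 0 := Finset.sum_eq_zero fun x _ => by
        have h := hab x.1 x.2
        rw [hb0, mul_zero] at h
        have hx : v x = 0 := by simpa using h
        rw [hx]
        simp
      rw [hzero] at hv
      norm_num at hv
    have hsub : { r : ℝ | ∃ (X : Matrix (Fin dA) (Fin dA) ℂ) (Y : Matrix (Fin dB) (Fin dB) ℂ),
        (margA (rho v) * X).trace = 0 ∧ (margB (rho v) * Y).trace = 0 ∧
        (margA (rho v) * X * Xᴴ).trace = 1 ∧ (margB (rho v) * Y * Yᴴ).trace = 1 ∧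
        r = ‖((rho v) * (X ⊗ₖ Yᴴ)).trace‖ } ⊆ {0} := by
      rintro r ⟨X, Y, h1, -, -, -, hr⟩
      simp only [Set.mem_singleton_iff]
      rw [trace_A1] at h1
      have hfact : ∑ i, ∑ j, (∑ k, v (i,k) * star (v (j,k))) * X j i
          = (∑ k, b k * star (b k)) * (∑ i, ∑ j, (a i * star (a j)) * X j i) := by
        rw [Finset.mul_sum]
        refine Finset.sum_congr rfl fun i _ => ?_
        rw [Finset.mul_sum]
        refine Finset.sum_congr rfl fun j _ => ?_
        have e : (∑ k, v (i,k) * star (v (j,k)))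
            = (∑ k, b k * star (b k)) * (a i * star (a j)) := by
          rw [Finset.sum_mul]
          refine Finset.sum_congr rfl fun k _ => ?_
          rw [hab i k, hab j k]
          simp only [StarMul.star_mul]
          ring
        rw [e]; ring
      rw [hfact] at h1
      have hE : (∑ i, ∑ j, (a i * star (a j)) * X j i) = 0 :=
        (mul_eq_zero.mp h1).resolve_left hbnz
      rw [hr, trace_A5]
      have hT : (∑ j, ∑ l, star (∑ i, star (X i j) * v (i,l))
          * (∑ k, v (j,k) * star (Y k l))) = 0 := by
        calc ∑ j, ∑ l, star (∑ i, star (X i j) * v (i,l)) * (∑ k, v (j,k) * star (Y k l))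
            = ∑ j, ∑ l, ((∑ i, X i j * star (a i)) * a j)
                * (star (b l) * (∑ k, b k * star (Y k l))) := by
              refine Finset.sum_congr rfl fun j _ => Finset.sum_congr rfl fun l _ => ?_
              have e1 : star (∑ i, star (X i j) * v (i,l))
                  = (∑ i, X i j * star (a i)) * star (b l) := by
                rw [star_sum, Finset.sum_mul]
                refine Finset.sum_congr rfl fun i _ => ?_
                rw [hab i l]
                simp only [StarMul.star_mul, star_star]
                ring
              have e2 : (∑ k, v (j,k) * star (Y k l))
                  = a j * (∑ k, b k * star (Y k l)) := by
                rw [Finset.mul_sum]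
                refine Finset.sum_congr rfl fun k _ => ?_
                rw [hab j k]; ring
              rw [e1, e2]; ring
          _ = (∑ j, (∑ i, X i j * star (a i)) * a j)
              * (∑ l, star (b l) * (∑ k, b k * star (Y k l))) := by
              rw [Finset.sum_mul_sum]
          _ = 0 := by
              have hEq : (∑ j, (∑ i, X i j * star (a i)) * a j)
                  = ∑ i, ∑ j, (a i * star (a j)) * X j i := by
                refine Finset.sum_congr rfl fun j _ => ?_
                rw [Finset.sum_mul]
                exact Finset.sum_congr rfl fun i _ => by ring
              rw [hEq, hE, zero_mul]
      rw [hT]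
      simp
    rcases Set.subset_singleton_iff_eq.mp hsub with h | h
    · rw [h, Real.sSup_empty]
    · rw [h]
      exact csSup_singleton 0
  · intro hnp
    rw [hrho]
    unfold mu
    obtain ⟨X, Y, h1, h2, h3, h4, h5⟩ := exists_one v hv hnp
    have hub : ∀ r ∈ { r : ℝ | ∃ (X : Matrix (Fin dA) (Fin dA) ℂ)
        (Y : Matrix (Fin dB) (Fin dB) ℂ),
        (margA (rho v) * X).trace = 0 ∧ (margB (rho v) * Y).trace = 0 ∧
        (margA (rho v) * X * Xᴴ).trace = 1 ∧ (margB (rho v) * Y * Yᴴ).trace = 1 ∧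
        r = ‖((rho v) * (X ⊗ₖ Yᴴ)).trace‖ }, r ≤ 1 := by
      rintro r ⟨X', Y', -, -, h3', h4', hr⟩
      rw [hr]
      exact key_bound v X' Y' h3' h4'
    have hmem : (1:ℝ) ∈ { r : ℝ | ∃ (X : Matrix (Fin dA) (Fin dA) ℂ)
        (Y : Matrix (Fin dB) (Fin dB) ℂ),
        (margA (rho v) * X).trace = 0 ∧ (margB (rho v) * Y).trace = 0 ∧
        (margA (rho v) * X * Xᴴ).trace = 1 ∧ (margB (rho v) * Y * Yᴴ).trace = 1 ∧
        r = ‖((rho v) * (X ⊗ₖ Yᴴ)).trace‖ } := by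
      exact ⟨X, Y, h1, h2, h3, h4, by rw [h5]; simp⟩
    exact le_antisymm (Real.sSup_le hub zero_le_one)
      (le_csSup ⟨1, fun r hr => hub r hr⟩ hmem)

end
end

section
/- Let ψ be the two-qubit Bell vector, ψ (i,k) = (1/√2) if i = k and 0 otherwise (indices in Fin 2 × Fin 2), and for 0 ≤ p ≤ 1 let ρ^(p) = (1−p)·(I/4) + p·ψψᴴ be the isotropic state on the bipartite space indexed by Fin 2 × Fin 2, where I is the 4×4 identity. Then μ(ρ^(p)) = p. -/
open Matrix
open scoped Kronecker ComplexOrder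

noncomputable section

abbrev BB : Matrix (Fin 2 × Fin 2) (Fin 2 × Fin 2) ℂ :=
  Matrix.of fun x y => if x.1 = x.2 ∧ y.1 = y.2 then 1 else 0

lemma rho_eq (p : ℝ) :
    (((1 - p) / 4 : ℂ) • (1 : Matrix (Fin 2 × Fin 2) (Fin 2 × Fin 2) ℂ) +
      (p : ℂ) • Matrix.of fun x y =>
        (if x.1 = x.2 then (1 / Real.sqrt 2 : ℂ) else 0) *
          star (if y.1 = y.2 then (1 / Real.sqrt 2 : ℂ) else 0))
    = ((1 - p) / 4 : ℂ) • 1 + ((p : ℂ)/2) • BB := by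
  congr 1
  ext x y
  by_cases h1 : x.1 = x.2 <;> by_cases h2 : y.1 = y.2 <;>
    simp [h1, h2, Matrix.smul_apply]
  have h : ((Real.sqrt 2 : ℝ) : ℂ) * ((Real.sqrt 2 : ℝ) : ℂ) = 2 := by
    norm_cast
    exact Real.mul_self_sqrt (by norm_num)
  have h2 : ((Real.sqrt 2 : ℝ) : ℂ)⁻¹ * ((Real.sqrt 2 : ℝ) : ℂ)⁻¹ = 1 / 2 := by
    rw [← mul_inv, h]
    norm_num
  rw [h2]
  ring

lemma margA_BB : margA BB = 1 := by
  ext i j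
  fin_cases i <;> fin_cases j <;>
    simp [margA, Fin.sum_univ_two, Matrix.one_apply] <;> decide

lemma margB_BB : margB BB = 1 := by
  ext i j
  fin_cases i <;> fin_cases j <;>
    simp [margB, Fin.sum_univ_two, Matrix.one_apply] <;> decide

lemma margA_one : margA (1 : Matrix (Fin 2 × Fin 2) (Fin 2 × Fin 2) ℂ) = (2:ℂ) • 1 := by
  ext i j
  fin_cases i <;> fin_cases j <;>
    simp [margA, Fin.sum_univ_two, Matrix.one_apply, Prod.ext_iff]

lemma margB_one : margB (1 : Matrix (Fin 2 × Fin 2) (Fin 2 × Fin 2) ℂ) = (2:ℂ) • 1 := by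
  ext i j
  fin_cases i <;> fin_cases j <;>
    simp [margB, Fin.sum_univ_two, Matrix.one_apply, Prod.ext_iff]

lemma margA_lin (a b : ℂ) (M N : Matrix (Fin 2 × Fin 2) (Fin 2 × Fin 2) ℂ) :
    margA (a • M + b • N) = a • margA M + b • margA N := by
  ext i j
  simp [margA, Fin.sum_univ_two]; ring

lemma margB_lin (a b : ℂ) (M N : Matrix (Fin 2 × Fin 2) (Fin 2 × Fin 2) ℂ) :
    margB (a • M + b • N) = a • margB M + b • margB N := by
  ext i j
  simp [margB, Fin.sum_univ_two]; ring

lemma margA_rho (p : ℝ) :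
    margA (((1 - p) / 4 : ℂ) • 1 + ((p : ℂ)/2) • BB) = ((1:ℂ)/2) • 1 := by
  rw [margA_lin, margA_BB, margA_one, smul_smul, ← add_smul]
  congr 1
  ring

lemma margB_rho (p : ℝ) :
    margB (((1 - p) / 4 : ℂ) • 1 + ((p : ℂ)/2) • BB) = ((1:ℂ)/2) • 1 := by
  rw [margB_lin, margB_BB, margB_one, smul_smul, ← add_smul]
  congr 1
  ring

lemma trace_BB_mul (X Y : Matrix (Fin 2) (Fin 2) ℂ) :
    (BB * (X ⊗ₖ Yᴴ)).trace =
      X 0 0 * star (Y 0 0) + X 0 1 * star (Y 1 0) +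
      X 1 0 * star (Y 0 1) + X 1 1 * star (Y 1 1) := by
  simp [Matrix.trace, Matrix.mul_apply, Fintype.sum_prod_type, Fin.sum_univ_two,
    Matrix.conjTranspose_apply, Matrix.diag]
  ring

lemma trace_XXH (X : Matrix (Fin 2) (Fin 2) ℂ) :
    (X * Xᴴ).trace = ((‖X 0 0‖)^2 + (‖X 0 1‖)^2 +
      (‖X 1 0‖)^2 + (‖X 1 1‖)^2 : ℝ) := by
  simp [Matrix.trace, Matrix.mul_apply, Fin.sum_univ_two, Matrix.conjTranspose_apply,
    Matrix.diag, Complex.mul_conj, Complex.sq_norm]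
  ring


lemma trace_rho_mul (p : ℝ) (X Y : Matrix (Fin 2) (Fin 2) ℂ) :
    (((((1 - p) / 4 : ℂ)) • 1 + ((p : ℂ)/2) • BB) * (X ⊗ₖ Yᴴ)).trace =
      ((1 - p) / 4 : ℂ) * (X.trace * star Y.trace) +
      ((p : ℂ)/2) * (X 0 0 * star (Y 0 0) + X 0 1 * star (Y 1 0) +
        X 1 0 * star (Y 0 1) + X 1 1 * star (Y 1 1)) := by
  rw [Matrix.add_mul, Matrix.smul_mul, Matrix.smul_mul, Matrix.one_mul, Matrix.trace_add,
    Matrix.trace_smul, Matrix.trace_smul, Matrix.trace_kronecker, trace_BB_mul,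
    Matrix.trace_conjTranspose]
  simp [smul_eq_mul]


set_option maxHeartbeats 1000000 in
/-- The maximal correlation of the two-qubit isotropic state
`ρ^(p) = (1-p) I/4 + p |ψ⟩⟨ψ|` equals `p`. -/
theorem mu_isotropic_eq (p : ℝ) (hp0 : 0 ≤ p) (hp1 : p ≤ 1) :
    mu (((1 - p) / 4 : ℂ) • (1 : Matrix (Fin 2 × Fin 2) (Fin 2 × Fin 2) ℂ) +
      (p : ℂ) • Matrix.of fun x y =>
        (if x.1 = x.2 then (1 / Real.sqrt 2 : ℂ) else 0) *
          star (if y.1 = y.2 then (1 / Real.sqrt 2 : ℂ) else 0)) = p := by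
  rw [rho_eq]
  unfold mu
  set ρ := ((1 - p) / 4 : ℂ) • (1 : Matrix (Fin 2 × Fin 2) (Fin 2 × Fin 2) ℂ) +
      ((p : ℂ)/2) • BB with hρ
  set S := { r : ℝ | ∃ (X : Matrix (Fin 2) (Fin 2) ℂ) (Y : Matrix (Fin 2) (Fin 2) ℂ),
    (margA ρ * X).trace = 0 ∧ (margB ρ * Y).trace = 0 ∧
    (margA ρ * X * Xᴴ).trace = 1 ∧ (margB ρ * Y * Yᴴ).trace = 1 ∧
    r = ‖(ρ * (X ⊗ₖ Yᴴ)).trace‖ } with hS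
  have hmA : margA ρ = ((1:ℂ)/2) • 1 := margA_rho p
  have hmB : margB ρ = ((1:ℂ)/2) • 1 := margB_rho p
  -- membership of p
  have hmem : p ∈ S := by
    refine ⟨!![0,1;1,0], !![0,1;1,0], ?_, ?_, ?_, ?_, ?_⟩
    · rw [hmA, Matrix.smul_mul, Matrix.one_mul, Matrix.trace_smul]
      simp [Matrix.trace_fin_two]
    · rw [hmB, Matrix.smul_mul, Matrix.one_mul, Matrix.trace_smul]
      simp [Matrix.trace_fin_two]
    · rw [hmA, Matrix.smul_mul, Matrix.smul_mul, Matrix.one_mul, Matrix.trace_smul, trace_XXH]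
      norm_num
    · rw [hmB, Matrix.smul_mul, Matrix.smul_mul, Matrix.one_mul, Matrix.trace_smul, trace_XXH]
      norm_num
    · rw [trace_rho_mul]
      simp [Matrix.trace_fin_two]
      rw [abs_of_nonneg hp0, show ((1:ℂ)+1) = 2 by norm_num, Complex.norm_two]
      ring
  -- upper bound
  have hub : ∀ r ∈ S, r ≤ p := by
    rintro r ⟨X, Y, h1, h2, h3, h4, h5⟩
    rw [hmA, Matrix.smul_mul, Matrix.one_mul, Matrix.trace_smul, smul_eq_mul] at h1
    have htX : X.trace = 0 := by
      field_simp at h1; simpa using h1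
    rw [hmA, Matrix.smul_mul, Matrix.smul_mul, Matrix.one_mul, Matrix.trace_smul,
      trace_XXH, smul_eq_mul] at h3
    have hX2 : (‖X 0 0‖)^2 + (‖X 0 1‖)^2 +
        (‖X 1 0‖)^2 + (‖X 1 1‖)^2 = 2 := by
      field_simp at h3
      exact_mod_cast h3
    rw [hmB, Matrix.smul_mul, Matrix.smul_mul, Matrix.one_mul, Matrix.trace_smul,
      trace_XXH, smul_eq_mul] at h4
    have hY2 : (‖Y 0 0‖)^2 + (‖Y 0 1‖)^2 +
        (‖Y 1 0‖)^2 + (‖Y 1 1‖)^2 = 2 := by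
      field_simp at h4
      exact_mod_cast h4
    rw [trace_rho_mul, htX] at h5
    simp only [zero_mul, mul_zero, zero_add] at h5
    set Sum : ℂ := X 0 0 * star (Y 0 0) + X 0 1 * star (Y 1 0) +
        X 1 0 * star (Y 0 1) + X 1 1 * star (Y 1 1) with hSum
    have hr : r = (p/2) * ‖Sum‖ := by
      rw [h5, norm_mul, show ((p:ℂ)/2) = (((p/2 : ℝ)):ℂ) by push_cast; ring,
        Complex.norm_real, Real.norm_eq_abs, abs_of_nonneg (by linarith)]
    have habs : ‖Sum‖ ≤ 2 := by
      have h6 : ‖Sum‖ ≤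
          ‖X 0 0‖ * ‖Y 0 0‖ +
          ‖X 0 1‖ * ‖Y 1 0‖ +
          ‖X 1 0‖ * ‖Y 0 1‖ +
          ‖X 1 1‖ * ‖Y 1 1‖ := by
        calc ‖Sum‖ ≤ ‖X 0 0 * star (Y 0 0) + X 0 1 * star (Y 1 0) +
              X 1 0 * star (Y 0 1)‖ + ‖X 1 1 * star (Y 1 1)‖ := norm_add_le _ _
          _ ≤ (‖X 0 0 * star (Y 0 0) + X 0 1 * star (Y 1 0)‖ +
              ‖X 1 0 * star (Y 0 1)‖) + ‖X 1 1 * star (Y 1 1)‖ := by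
              gcongr; exact norm_add_le _ _
          _ ≤ ((‖X 0 0 * star (Y 0 0)‖ + ‖X 0 1 * star (Y 1 0)‖) +
              ‖X 1 0 * star (Y 0 1)‖) + ‖X 1 1 * star (Y 1 1)‖ := by
              gcongr; exact norm_add_le _ _
          _ = _ := by simp [norm_mul]
      have := norm_nonneg (X 0 0)
      nlinarith [sq_nonneg (‖X 0 0‖ - ‖Y 0 0‖),
        sq_nonneg (‖X 0 1‖ - ‖Y 1 0‖),
        sq_nonneg (‖X 1 0‖ - ‖Y 0 1‖),
        sq_nonneg (‖X 1 1‖ - ‖Y 1 1‖)]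
    rw [hr]
    nlinarith [norm_nonneg Sum]
  exact le_antisymm (csSup_le ⟨p, hmem⟩ hub) (le_csSup ⟨p, hub⟩ hmem)


end
end

section
/- Let ρ be a positive semidefinite complex matrix indexed by (Fin d_A × Fin d_B), and let X (indexed by Fin d_A) and Y (indexed by Fin d_B) be Hermitian matrices such that ρ * (X ⊗ I) = ρ * (I ⊗ Y), where ⊗ is the Kronecker product. Then for every natural number n, ρ * (Xⁿ ⊗ I) = ρ * (I ⊗ Yⁿ); consequently ρ * (q(X) ⊗ I) = ρ * (I ⊗ q(Y)) for every polynomial q. -/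
open Matrix
open scoped Kronecker ComplexOrder

noncomputable section

/-- If `ρ (X ⊗ I) = ρ (I ⊗ Y)` with `ρ` positive semidefinite and `X`, `Y` Hermitian, then
`ρ (Xⁿ ⊗ I) = ρ (I ⊗ Yⁿ)` for all `n`, and `ρ (q(X) ⊗ I) = ρ (I ⊗ q(Y))` for all
polynomials `q`. -/
theorem mul_pow_kron_eq {dA dB : ℕ}
    (ρ : Matrix (Fin dA × Fin dB) (Fin dA × Fin dB) ℂ) (hρ : ρ.PosSemidef)
    (X : Matrix (Fin dA) (Fin dA) ℂ) (Y : Matrix (Fin dB) (Fin dB) ℂ)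
    (hX : X.IsHermitian) (hY : Y.IsHermitian)
    (h : ρ * (X ⊗ₖ (1 : Matrix (Fin dB) (Fin dB) ℂ)) =
      ρ * ((1 : Matrix (Fin dA) (Fin dA) ℂ) ⊗ₖ Y)) :
    (∀ n : ℕ, ρ * ((X ^ n) ⊗ₖ (1 : Matrix (Fin dB) (Fin dB) ℂ)) =
        ρ * ((1 : Matrix (Fin dA) (Fin dA) ℂ) ⊗ₖ (Y ^ n))) ∧
    ∀ q : Polynomial ℂ, ρ * ((Polynomial.aeval X q) ⊗ₖ (1 : Matrix (Fin dB) (Fin dB) ℂ)) =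
        ρ * ((1 : Matrix (Fin dA) (Fin dA) ℂ) ⊗ₖ (Polynomial.aeval Y q)) := by
  have hpow : ∀ n : ℕ, ρ * ((X ^ n) ⊗ₖ (1 : Matrix (Fin dB) (Fin dB) ℂ)) =
      ρ * ((1 : Matrix (Fin dA) (Fin dA) ℂ) ⊗ₖ (Y ^ n)) := by
    intro n
    induction n with
    | zero => simp
    | succ n ih =>
      have hA : (X ^ (n + 1)) ⊗ₖ (1 : Matrix (Fin dB) (Fin dB) ℂ) =
          (X ⊗ₖ (1 : Matrix (Fin dB) (Fin dB) ℂ)) *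
            ((X ^ n) ⊗ₖ (1 : Matrix (Fin dB) (Fin dB) ℂ)) := by
        rw [← Matrix.mul_kronecker_mul, one_mul, pow_succ']
      have hB : (1 : Matrix (Fin dA) (Fin dA) ℂ) ⊗ₖ (Y ^ (n + 1)) =
          ((1 : Matrix (Fin dA) (Fin dA) ℂ) ⊗ₖ (Y ^ n)) *
            ((1 : Matrix (Fin dA) (Fin dA) ℂ) ⊗ₖ Y) := by
        rw [← Matrix.mul_kronecker_mul, one_mul, pow_succ]
      have comm : ((1 : Matrix (Fin dA) (Fin dA) ℂ) ⊗ₖ Y) *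
            ((X ^ n) ⊗ₖ (1 : Matrix (Fin dB) (Fin dB) ℂ)) =
          ((X ^ n) ⊗ₖ (1 : Matrix (Fin dB) (Fin dB) ℂ)) *
            ((1 : Matrix (Fin dA) (Fin dA) ℂ) ⊗ₖ Y) := by
        rw [← Matrix.mul_kronecker_mul, ← Matrix.mul_kronecker_mul]
        simp
      calc ρ * ((X ^ (n + 1)) ⊗ₖ (1 : Matrix (Fin dB) (Fin dB) ℂ))
          = ρ * (X ⊗ₖ (1 : Matrix (Fin dB) (Fin dB) ℂ)) *
            ((X ^ n) ⊗ₖ (1 : Matrix (Fin dB) (Fin dB) ℂ)) := by rw [hA, mul_assoc]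
        _ = ρ * ((1 : Matrix (Fin dA) (Fin dA) ℂ) ⊗ₖ Y) *
            ((X ^ n) ⊗ₖ (1 : Matrix (Fin dB) (Fin dB) ℂ)) := by rw [h]
        _ = ρ * ((X ^ n) ⊗ₖ (1 : Matrix (Fin dB) (Fin dB) ℂ)) *
            ((1 : Matrix (Fin dA) (Fin dA) ℂ) ⊗ₖ Y) := by
              rw [mul_assoc, comm, mul_assoc]
        _ = ρ * ((1 : Matrix (Fin dA) (Fin dA) ℂ) ⊗ₖ (Y ^ n)) *
            ((1 : Matrix (Fin dA) (Fin dA) ℂ) ⊗ₖ Y) := by rw [ih]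
        _ = ρ * ((1 : Matrix (Fin dA) (Fin dA) ℂ) ⊗ₖ (Y ^ (n + 1))) := by
              rw [hB, mul_assoc]
  refine ⟨hpow, ?_⟩
  intro q
  induction q using Polynomial.induction_on' with
  | add p q hp hq =>
    simp only [map_add, Matrix.add_kronecker, Matrix.kronecker_add, mul_add, hp, hq]
  | monomial n a =>
    simp only [Polynomial.aeval_monomial, ← Algebra.smul_def]
    rw [Matrix.smul_kronecker, Matrix.kronecker_smul, mul_smul_comm, mul_smul_comm,
      hpow n]

end
end
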